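/- arXiv:0909.2767 — 4 statements merged into one kernel-verified Lean document; each statement's English description precedes it below -/
import Mathlib

section
/- Let G be a cubic graph and let H be a maximum 3-edge-colorable subgraph of G. Then the set of edges E(G) \ E(H) is a matching in G (no two edges of E(G) \ E(H) share an endpoint). -/
/-- A multigraph on vertex type `V` with edge type `E`: each edge has a pair of
endpoints (an element of `Sym2 V`), and there are no loops.  Multiple edges
(distinct edges with the same endpoints) are allowed. -/
structure Multigraph (V : Type) (E : Type) where
  ends : E → Sym2 V
  no_loops : ∀ e : E, ¬ (ends e).IsDiag

namespace Multigraph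

variable {V E : Type}

/-- The degree of a vertex `v` inside the set `S` of edges:
the number of edges of `S` incident to `v`. -/
noncomputable def degreeIn (G : Multigraph V E) (S : Set E) (v : V) : ℕ :=
  {e ∈ S | v ∈ G.ends e}.ncard

/-- The degree of a vertex: the number of edges incident to it. -/
noncomputable def degree (G : Multigraph V E) (v : V) : ℕ :=
  G.degreeIn Set.univ v

/-- A cubic graph: every vertex has degree exactly `3`. -/
def IsCubic (G : Multigraph V E) : Prop :=
  ∀ v : V, G.degree v = 3

/-- Two edges are adjacent if they share an endpoint. -/
def EdgeAdj (G : Multigraph V E) (e f : E) : Prop :=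
  ∃ v : V, v ∈ G.ends e ∧ v ∈ G.ends f

/-- A set of edges is a matching if no two distinct edges of it share an endpoint. -/
def IsMatching (G : Multigraph V E) (M : Set E) : Prop :=
  ∀ e ∈ M, ∀ f ∈ M, e ≠ f → ¬ G.EdgeAdj e f

/-- A perfect matching (`1`-factor): a matching covering every vertex. -/
def IsPerfectMatching (G : Multigraph V E) (F : Set E) : Prop :=
  G.IsMatching F ∧ ∀ v : V, ∃ e ∈ F, v ∈ G.ends e

/-- A `2`-factor: a spanning subgraph in which every vertex has degree exactly `2`. -/
def Is2Factor (G : Multigraph V E) (F : Set E) : Prop :=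
  ∀ v : V, G.degreeIn F v = 2

/-- `c` is a proper edge coloring of the (spanning) subgraph with edge set `S`:
distinct adjacent edges of `S` get distinct colors. -/
def IsProperColoring (G : Multigraph V E) (S : Set E) {k : ℕ} (c : E → Fin k) : Prop :=
  ∀ e ∈ S, ∀ f ∈ S, e ≠ f → G.EdgeAdj e f → c e ≠ c f

/-- The (spanning) subgraph with edge set `S` is `k`-edge-colorable. -/
def Colorable (G : Multigraph V E) (k : ℕ) (S : Set E) : Prop :=
  ∃ c : E → Fin k, G.IsProperColoring S c

/-- `H` is (the edge set of) a maximum `k`-edge-colorable subgraph of `G`. -/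
def IsMaxColorable (G : Multigraph V E) (k : ℕ) (H : Set E) : Prop :=
  G.Colorable k H ∧ ∀ S : Set E, G.Colorable k S → S.ncard ≤ H.ncard

/-- `ν_k(G)`: the number of edges of a maximum `k`-edge-colorable subgraph of `G`. -/
noncomputable def nu (G : Multigraph V E) (k : ℕ) : ℕ :=
  sSup {n : ℕ | ∃ S : Set E, G.Colorable k S ∧ S.ncard = n}

/-- The set of colors appearing (under the coloring `c` of the subgraph `H`)
on the edges of `H` incident to the vertex `w`. -/
def colorsAt (G : Multigraph V E) (H : Set E) {k : ℕ} (c : E → Fin k) (w : V) :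
    Set (Fin k) :=
  {γ : Fin k | ∃ f ∈ H, w ∈ G.ends f ∧ c f = γ}

end Multigraph

open Relation

private def reachN {V : Type} (step : V → V → Prop) (u : V) : ℕ → V → Prop
  | 0, z => z = u
  | (n+1), z => ∃ w, reachN step u n w ∧ step w z

private lemma reachN_iff {V : Type} (step : V → V → Prop) (u z : V) :
    ReflTransGen step u z ↔ ∃ n, reachN step u n z := by
  constructor
  · intro h
    induction h with
    | refl => exact ⟨0, rfl⟩
    | tail _ hbc ih => obtain ⟨n, hn⟩ := ih; exact ⟨n+1, _, hn, hbc⟩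
  · rintro ⟨n, hn⟩
    induction n generalizing z with
    | zero => cases hn; exact ReflTransGen.refl
    | succ m ih => obtain ⟨w, hw, hst⟩ := hn; exact (ih w hw).tail hst

private lemma pair_forced {α : Type} {a b z1 z2 w1 w2 : α} (hab : a ≠ b) (hne : z1 ≠ z2)
    (hz1 : z1 = a ∨ z1 = b) (hz2 : z2 = a ∨ z2 = b) (hw1 : w1 = a ∨ w1 = b)
    (hw2 : w2 = a ∨ w2 = b) (hw1z1 : w1 ≠ z1) (hw2z2 : w2 ≠ z2) : w1 = z2 ∧ w2 = z1 := by
  rcases hz1 with rfl | rfl <;> rcases hz2 with rfl | rfl <;> rcases hw1 with rfl | rfl <;>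
    rcases hw2 with rfl | rfl <;> simp_all

private lemma three_leaves {V E : Type} [Fintype V] [Fintype E] (ends : E → Sym2 V)
    (hnl : ∀ e, ¬ (ends e).IsDiag)
    (K : Set E)
    (hdeg2 : ∀ z : V, ∀ h1 h2 h3, h1 ∈ K → h2 ∈ K → h3 ∈ K →
      z ∈ ends h1 → z ∈ ends h2 → z ∈ ends h3 → h1 = h2 ∨ h1 = h3 ∨ h2 = h3)
    (u v x : V) (huv : u ≠ v) (hux : u ≠ x) (hvx : v ≠ x)
    (hv : ReflTransGen (fun z w => ∃ h ∈ K, z ∈ ends h ∧ w ∈ ends h) u v)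
    (hx : ReflTransGen (fun z w => ∃ h ∈ K, z ∈ ends h ∧ w ∈ ends h) u x)
    (eu : E) (hu1 : eu ∈ K ∧ u ∈ ends eu ∧ ∀ h ∈ K, u ∈ ends h → h = eu)
    (ev : E) (hv1 : ev ∈ K ∧ v ∈ ends ev ∧ ∀ h ∈ K, v ∈ ends h → h = ev)
    (ex : E) (hx1 : ex ∈ K ∧ x ∈ ends ex ∧ ∀ h ∈ K, x ∈ ends h → h = ex) :
    False := by
  classical
  set step : V → V → Prop := fun z w => ∃ h ∈ K, z ∈ ends h ∧ w ∈ ends h with hstep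
  -- the reachable set
  set R : Finset V := Finset.univ.filter (fun z => ReflTransGen step u z) with hR
  have hmemR : ∀ z, z ∈ R ↔ ReflTransGen step u z := by
    intro z; simp [hR]
  have huR : u ∈ R := (hmemR u).2 ReflTransGen.refl
  have hvR : v ∈ R := (hmemR v).2 hv
  have hxR : x ∈ R := (hmemR x).2 hx
  -- edges touching R
  set KR : Finset E := Finset.univ.filter (fun h => h ∈ K ∧ ∃ z ∈ ends h, z ∈ R) with hKR
  have hmemKR : ∀ h, h ∈ KR ↔ (h ∈ K ∧ ∃ z ∈ ends h, z ∈ R) := by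
    intro h; simp [hKR]
  have hclose : ∀ h ∈ KR, ∀ z ∈ ends h, z ∈ R := by
    intro h hh z hz
    obtain ⟨hK, z0, hz0, hz0R⟩ := (hmemKR h).1 hh
    exact (hmemR z).2 (((hmemR z0).1 hz0R).tail ⟨h, hK, hz0, hz⟩)
  -- ends as a pair
  have hpair : ∀ h : E, ∃ a b : V, a ≠ b ∧ ends h = s(a, b) := by
    intro h
    obtain ⟨⟨a, b⟩, hab⟩ := Quot.exists_rep (ends h)
    refine ⟨a, b, fun hEq => hnl h ?_, hab.symm⟩
    rw [← hab]
    exact Sym2.mk_isDiag_iff.2 hEq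
  -- degree function
  set d : V → ℕ := fun z => (KR.filter (fun h => z ∈ ends h)).card with hd
  -- handshake
  have handshake : ∑ z ∈ R, d z = 2 * KR.card := by
    have h1 : ∑ z ∈ R, d z = ∑ z ∈ R, ∑ h ∈ KR, (if z ∈ ends h then 1 else 0) := by
      exact Finset.sum_congr rfl fun z _ => Finset.card_filter _ _
    rw [h1, Finset.sum_comm]
    have h2 : ∀ h ∈ KR, ∑ z ∈ R, (if z ∈ ends h then 1 else 0) = 2 := by
      intro h hh
      obtain ⟨a, b, hab, hends⟩ := hpair h
      have ha : a ∈ R := hclose h hh a (by rw [hends]; simp)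
      have hb : b ∈ R := hclose h hh b (by rw [hends]; simp)
      have : (R.filter (fun z => z ∈ ends h)) = {a, b} := by
        ext z
        simp only [Finset.mem_filter, Finset.mem_insert, Finset.mem_singleton, hends,
          Sym2.mem_iff]
        constructor
        · rintro ⟨_, hz⟩; exact hz
        · rintro (rfl | rfl) <;> simp [ha, hb]
      rw [← Finset.card_filter, this, Finset.card_insert_of_notMem (by simpa using hab),
        Finset.card_singleton]
    rw [Finset.sum_congr rfl h2, Finset.sum_const, smul_eq_mul, mul_comm]
  -- degrees at most 2
  have hdle : ∀ z, d z ≤ 2 := by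
    intro z
    by_contra hgt
    push_neg at hgt
    obtain ⟨h1, h2, h3, m1, m2, m3, n12, n13, n23⟩ := Finset.two_lt_card_iff.1 hgt
    simp only [Finset.mem_filter] at m1 m2 m3
    have k1 := ((hmemKR h1).1 m1.1).1
    have k2 := ((hmemKR h2).1 m2.1).1
    have k3 := ((hmemKR h3).1 m3.1).1
    rcases hdeg2 z h1 h2 h3 k1 k2 k3 m1.2 m2.2 m3.2 with h | h | h
    exacts [n12 h, n13 h, n23 h]
  -- degrees of u, v, x equal 1
  have hdeg1 : ∀ (z : V) (ez : E), z ∈ R →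
      (ez ∈ K ∧ z ∈ ends ez ∧ ∀ h ∈ K, z ∈ ends h → h = ez) → d z = 1 := by
    rintro z ez hzR ⟨hk, hze, huniq⟩
    have : KR.filter (fun h => z ∈ ends h) = {ez} := by
      ext h
      simp only [Finset.mem_filter, Finset.mem_singleton]
      constructor
      · rintro ⟨hh, hz⟩; exact huniq h ((hmemKR h).1 hh).1 hz
      · rintro rfl
        exact ⟨(hmemKR _).2 ⟨hk, z, hze, hzR⟩, hze⟩
    simp [hd, this]
  have hdu : d u = 1 := hdeg1 u eu huR hu1
  have hdv : d v = 1 := hdeg1 v ev hvR hv1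
  have hdx : d x = 1 := hdeg1 x ex hxR hx1
  -- split the sum
  set T : Finset V := {u, v, x} with hT
  have hTsub : T ⊆ R := by
    intro z hz
    simp only [hT, Finset.mem_insert, Finset.mem_singleton] at hz
    rcases hz with rfl | rfl | rfl <;> assumption
  have hTcard : T.card = 3 := by
    rw [hT]
    rw [Finset.card_insert_of_notMem (by simp [huv, hux]),
      Finset.card_insert_of_notMem (by simp [hvx]), Finset.card_singleton]
  have hsumT : ∑ z ∈ T, d z = 3 := by
    rw [hT, Finset.sum_insert (by simp [huv, hux]), Finset.sum_insert (by simp [hvx]),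
      Finset.sum_singleton, hdu, hdv, hdx]
    rfl
  have hsplit : ∑ z ∈ R \ T, d z + ∑ z ∈ T, d z = ∑ z ∈ R, d z := Finset.sum_sdiff hTsub
  have hrest : ∑ z ∈ R \ T, d z ≤ 2 * (R \ T).card := by
    calc ∑ z ∈ R \ T, d z ≤ (R \ T).card • 2 :=
          Finset.sum_le_card_nsmul _ _ 2 (fun z _ => hdle z)
      _ = 2 * (R \ T).card := by rw [smul_eq_mul, mul_comm]
  have hcardsd : (R \ T).card = R.card - 3 := by rw [Finset.card_sdiff_of_subset hTsub, hTcard]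
  have h3le : 3 ≤ R.card := hTcard ▸ Finset.card_le_card hTsub
  -- injection from R.erase u into KR
  have hex0 : ∀ z ∈ R, ∃ n, reachN step u n z := fun z hz => (reachN_iff step u z).1 ((hmemR z).1 hz)
  haveI : Nonempty E := ⟨eu⟩
  set dist : V → ℕ := fun z => if h : ∃ n, reachN step u n z then Nat.find h else 0 with hdist
  have key : ∀ z ∈ R.erase u, ∃ h, h ∈ KR ∧ z ∈ ends h ∧ ∃ w, w ∈ ends h ∧ dist w < dist z := by
    intro z hz
    obtain ⟨hzu, hzR⟩ := Finset.mem_erase.1 hz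
    have hez : ∃ n, reachN step u n z := hex0 z hzR
    have hspec : reachN step u (dist z) z := by
      rw [hdist]; simp only [dif_pos hez]; exact Nat.find_spec hez
    have hdz0 : dist z ≠ 0 := by
      intro h0
      rw [h0] at hspec
      exact hzu hspec
    obtain ⟨m, hm⟩ : ∃ m, dist z = m + 1 := ⟨dist z - 1, by omega⟩
    rw [hm] at hspec
    obtain ⟨w, hw, hst⟩ := hspec
    obtain ⟨h, hK, hwh, hzh⟩ := hst
    have hwR : w ∈ R := (hmemR w).2 ((reachN_iff step u w).2 ⟨m, hw⟩)
    have hdw : dist w ≤ m := by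
      have hew : ∃ n, reachN step u n w := ⟨m, hw⟩
      rw [hdist]; simp only [dif_pos hew]; exact Nat.find_le hw
    refine ⟨h, (hmemKR h).2 ⟨hK, w, hwh, hwR⟩, hzh, w, hwh, by omega⟩
  set φ : V → E := fun z => if h : ∃ h, h ∈ KR ∧ z ∈ ends h ∧ ∃ w, w ∈ ends h ∧ dist w < dist z
    then h.choose else Classical.arbitrary E with hφ
  have hφspec : ∀ z ∈ R.erase u, φ z ∈ KR ∧ z ∈ ends (φ z) ∧ ∃ w, w ∈ ends (φ z) ∧ dist w < dist z := by
    intro z hz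
    have h := key z hz
    rw [hφ]; simp only [dif_pos h]
    exact h.choose_spec
  have hinj : Set.InjOn φ ↑(R.erase u) := by
    intro z1 hz1 z2 hz2 heq
    by_contra hne
    obtain ⟨hKR1, hz1e, w1, hw1e, hw1lt⟩ := hφspec z1 hz1
    obtain ⟨hKR2, hz2e, w2, hw2e, hw2lt⟩ := hφspec z2 hz2
    rw [heq] at hz1e hw1e
    obtain ⟨a, b, hab, hends⟩ := hpair (φ z2)
    rw [hends, Sym2.mem_iff] at hz1e hz2e hw1e hw2e
    have hw1z1 : w1 ≠ z1 := fun h => by rw [h] at hw1lt; omega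
    have hw2z2 : w2 ≠ z2 := fun h => by rw [h] at hw2lt; omega
    have hw12 : w1 = z2 ∧ w2 = z1 :=
      pair_forced hab hne hz1e hz2e hw1e hw2e hw1z1 hw2z2
    rw [hw12.1] at hw1lt; rw [hw12.2] at hw2lt; omega
  have hcardle : (R.erase u).card ≤ KR.card :=
    Finset.card_le_card_of_injOn φ (fun z hz => (hφspec z hz).1) hinj
  have herase : (R.erase u).card = R.card - 1 := Finset.card_erase_of_mem huR
  omega



section Aux

variable {V E : Type}

private lemma ends_pair (G : Multigraph V E) (e : E) :
    ∃ a b : V, a ≠ b ∧ G.ends e = s(a, b) := by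
  obtain ⟨⟨a, b⟩, hab⟩ := Quot.exists_rep (G.ends e)
  refine ⟨a, b, fun hEq => G.no_loops e ?_, hab.symm⟩
  rw [← hab]
  exact Sym2.mk_isDiag_iff.2 hEq

private lemma other_end (G : Multigraph V E) (e : E) (v : V) (hv : v ∈ G.ends e) :
    ∃ u : V, u ≠ v ∧ G.ends e = s(v, u) := by
  obtain ⟨a, b, hab, he⟩ := ends_pair G e
  rw [he, Sym2.mem_iff] at hv
  rcases hv with rfl | rfl
  · exact ⟨b, Ne.symm hab, he⟩
  · exact ⟨a, hab, by rw [he, Sym2.eq_swap]⟩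

private lemma extend_contra [Fintype V] [Fintype E] (G : Multigraph V E)
    (H : Set E) (hmax : ∀ S : Set E, G.Colorable 3 S → S.ncard ≤ H.ncard)
    (c : E → Fin 3) (hc : G.IsProperColoring H c)
    (e : E) (he : e ∉ H) (a b : V) (hab : G.ends e = s(a, b)) (γ : Fin 3)
    (ha : γ ∉ G.colorsAt H c a) (hb : γ ∉ G.colorsAt H c b) : False := by
  classical
  set c' : E → Fin 3 := Function.update c e γ with hc'
  have hupd : ∀ h, h ≠ e → c' h = c h := fun h hh => Function.update_of_ne hh _ _
  have hproper : G.IsProperColoring (insert e H) c' := by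
    intro p hp q hq hpq hadj
    obtain ⟨z, hzp, hzq⟩ := hadj
    rcases Set.mem_insert_iff.1 hp with rfl | hpH
    · rcases Set.mem_insert_iff.1 hq with rfl | hqH
      · exact absurd rfl hpq
      · have hzab : z = a ∨ z = b := by rwa [hab, Sym2.mem_iff] at hzp
        have hqp : c' q = c q := hupd q (fun h => he (h ▸ hqH))
        rw [hqp, hc', Function.update_self]
        intro hEq
        rcases hzab with rfl | rfl
        · exact ha ⟨q, hqH, hzq, hEq.symm⟩
        · exact hb ⟨q, hqH, hzq, hEq.symm⟩
    · rcases Set.mem_insert_iff.1 hq with rfl | hqH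
      · have hzab : z = a ∨ z = b := by rwa [hab, Sym2.mem_iff] at hzq
        have hpp : c' p = c p := hupd p (fun h => he (h ▸ hpH))
        rw [hpp, hc', Function.update_self]
        intro hEq
        rcases hzab with rfl | rfl
        · exact ha ⟨p, hpH, hzp, hEq⟩
        · exact hb ⟨p, hpH, hzp, hEq⟩
      · rw [hupd p (fun h => he (h ▸ hpH)), hupd q (fun h => he (h ▸ hqH))]
        exact hc p hpH q hqH hpq ⟨z, hzp, hzq⟩
  have hle := hmax _ ⟨c', hproper⟩
  have hcard : (insert e H).ncard = H.ncard + 1 := Set.ncard_insert_of_notMem he (Set.toFinite H)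
  omega

end Aux


/-- If `H` is a maximum 3-edge-colorable subgraph of a cubic graph `G`,
then the set of edges `E(G) \ E(H)` is a matching of `G`. -/
theorem complement_of_max_three_colorable_is_matching
    {V E : Type} [Fintype V] [Fintype E] (G : Multigraph V E) (hG : G.IsCubic)
    (H : Set E) (hH : G.IsMaxColorable 3 H) :
    G.IsMatching Hᶜ := by
  classical
  intro e he f hf hef hadj
  obtain ⟨v, hve, hvf⟩ := hadj
  rw [Set.mem_compl_iff] at he hf
  obtain ⟨c, hc⟩ := hH.1
  -- uniqueness of an edge of a given color at a vertex
  have huniqcol : ∀ (z : V) (h1 h2 : E), h1 ∈ H → h2 ∈ H → z ∈ G.ends h1 → z ∈ G.ends h2 →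
      c h1 = c h2 → h1 = h2 := by
    intro z h1 h2 m1 m2 z1 z2 hcc
    by_contra hne
    exact hc h1 m1 h2 m2 hne ⟨z, z1, z2⟩ hcc
  -- other endpoints
  obtain ⟨u, huv, hendse⟩ := other_end G e v hve
  obtain ⟨x, hxv, hendsf⟩ := other_end G f v hvf
  have hue : u ∈ G.ends e := by rw [hendse]; simp
  have hxf : x ∈ G.ends f := by rw [hendsf]; simp
  -- degree counts
  have hdegset : ∀ z : V, ({h : E | z ∈ G.ends h}).ncard = 3 := by
    intro z
    have := hG z
    simpa [Multigraph.degree, Multigraph.degreeIn, Set.sep_univ] using this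
  have hHat : ∀ (z : V) (S : Set E), S ⊆ {h | z ∈ G.ends h} → (∀ s ∈ S, s ∉ H) →
      ({h | h ∈ H ∧ z ∈ G.ends h}).ncard ≤ 3 - S.ncard := by
    intro z S hS hSH
    have hsub : {h | h ∈ H ∧ z ∈ G.ends h} ⊆ {h | z ∈ G.ends h} \ S := by
      rintro h ⟨hh, hz⟩
      exact ⟨hz, fun hs => hSH h hs hh⟩
    calc ({h | h ∈ H ∧ z ∈ G.ends h}).ncard
        ≤ ({h | z ∈ G.ends h} \ S).ncard := Set.ncard_le_ncard hsub (Set.toFinite _)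
      _ = 3 - S.ncard := by rw [Set.ncard_diff hS (Set.toFinite _), hdegset]
  -- colorsAt as image
  have himg : ∀ (c0 : E → Fin 3) (w : V),
      G.colorsAt H c0 w = c0 '' {h | h ∈ H ∧ w ∈ G.ends h} := by
    intro c0 w
    ext β
    simp only [Multigraph.colorsAt, Set.mem_setOf_eq, Set.mem_image]
    constructor
    · rintro ⟨h, hh, hw, hcol⟩; exact ⟨h, ⟨hh, hw⟩, hcol⟩
    · rintro ⟨h, ⟨hh, hw⟩, hcol⟩; exact ⟨h, hh, hw, hcol⟩
  have hcardAt : ∀ (z : V) (S : Set E), S ⊆ {h | z ∈ G.ends h} → (∀ s ∈ S, s ∉ H) →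
      (G.colorsAt H c z).ncard ≤ 3 - S.ncard := by
    intro z S h1 h2
    rw [himg]
    exact le_trans (Set.ncard_image_le (Set.toFinite _)) (hHat z S h1 h2)
  have hpairef : ({e, f} : Set E).ncard = 2 := Set.ncard_pair hef
  have hcv : (G.colorsAt H c v).ncard ≤ 1 := by
    have := hcardAt v {e, f} (by rintro s (rfl | rfl) <;> assumption)
      (by rintro s (rfl | rfl) <;> assumption)
    omega
  have hcu : (G.colorsAt H c u).ncard ≤ 2 := by
    have := hcardAt u {e} (by rintro s rfl; exact hue) (by rintro s rfl; exact he)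
    have h1 : ({e} : Set E).ncard = 1 := Set.ncard_singleton e
    omega
  have hcx : (G.colorsAt H c x).ncard ≤ 2 := by
    have := hcardAt x {f} (by rintro s rfl; exact hxf) (by rintro s rfl; exact hf)
    have h1 : ({f} : Set E).ncard = 1 := Set.ncard_singleton f
    omega
  -- unions of colors at endpoints of missing edges cover everything
  have hUvu : G.colorsAt H c v ∪ G.colorsAt H c u = Set.univ := by
    by_contra hne
    obtain ⟨γ, hγ⟩ := (Set.ne_univ_iff_exists_notMem _).1 hne
    exact extend_contra G H hH.2 c hc e he v u hendse γ
      (fun h => hγ (Or.inl h)) (fun h => hγ (Or.inr h))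
  have hUvx : G.colorsAt H c v ∪ G.colorsAt H c x = Set.univ := by
    by_contra hne
    obtain ⟨γ, hγ⟩ := (Set.ne_univ_iff_exists_notMem _).1 hne
    exact extend_contra G H hH.2 c hc f hf v x hendsf γ
      (fun h => hγ (Or.inl h)) (fun h => hγ (Or.inr h))
  have huniv3 : (Set.univ : Set (Fin 3)).ncard = 3 := by
    simp [Set.ncard_univ]
  have hsum : 3 ≤ (G.colorsAt H c v).ncard + (G.colorsAt H c u).ncard := by
    calc 3 = (G.colorsAt H c v ∪ G.colorsAt H c u).ncard := by rw [hUvu, huniv3]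
      _ ≤ _ := Set.ncard_union_le _ _
  have hcv1 : (G.colorsAt H c v).ncard = 1 := by omega
  obtain ⟨γ, hγ⟩ := Set.ncard_eq_one.1 hcv1
  have hvcol : ∀ h, h ∈ H → v ∈ G.ends h → c h = γ := by
    intro h hh hz
    have : c h ∈ G.colorsAt H c v := ⟨h, hh, hz, rfl⟩
    rw [hγ] at this
    exact this
  have hcomplcard : ({γ}ᶜ : Set (Fin 3)).ncard = 2 := by
    rw [Set.compl_eq_univ_diff, Set.ncard_diff (Set.subset_univ _) (Set.toFinite _), huniv3,
      Set.ncard_singleton]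
  have hcu_eq : G.colorsAt H c u = {γ}ᶜ := by
    refine (Set.eq_of_subset_of_ncard_le ?_ (by omega) (Set.toFinite _)).symm
    intro β hβ
    have hβu : β ∈ G.colorsAt H c v ∪ G.colorsAt H c u := by rw [hUvu]; trivial
    rcases hβu with h | h
    · rw [hγ] at h; exact absurd h hβ
    · exact h
  have hcx_eq : G.colorsAt H c x = {γ}ᶜ := by
    refine (Set.eq_of_subset_of_ncard_le ?_ (by omega) (Set.toFinite _)).symm
    intro β hβ
    have hβu : β ∈ G.colorsAt H c v ∪ G.colorsAt H c x := by rw [hUvx]; trivial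
    rcases hβu with h | h
    · rw [hγ] at h; exact absurd h hβ
    · exact h
  have hγu : γ ∉ G.colorsAt H c u := by rw [hcu_eq]; simp
  have hγx : γ ∉ G.colorsAt H c x := by rw [hcx_eq]; simp
  -- u ≠ x
  have hux : u ≠ x := by
    intro hEq
    have huf : u ∈ G.ends f := by rw [hendsf, hEq]; simp
    have hle := hcardAt u {e, f} (by rintro s (rfl | rfl); exacts [hue, huf])
      (by rintro s (rfl | rfl) <;> assumption)
    rw [hcu_eq, hcomplcard, hpairef] at hle
    omega
  -- pick the second chain color
  obtain ⟨δ, hδγ⟩ := exists_ne γ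
  have hδu : δ ∈ G.colorsAt H c u := by rw [hcu_eq]; exact hδγ
  have hδx : δ ∈ G.colorsAt H c x := by rw [hcx_eq]; exact hδγ
  -- the Kempe chain machinery
  set K : Set E := {h | h ∈ H ∧ (c h = γ ∨ c h = δ)} with hK
  have hKmem : ∀ h, h ∈ K ↔ h ∈ H ∧ (c h = γ ∨ c h = δ) := fun h => Iff.rfl
  set step : V → V → Prop := fun z w => ∃ h ∈ K, z ∈ G.ends h ∧ w ∈ G.ends h with hstep
  set R : Set V := {z | Relation.ReflTransGen step u z} with hR
  have hRmem : ∀ z, z ∈ R ↔ Relation.ReflTransGen step u z := fun z => Iff.rfl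
  have huR : u ∈ R := (hRmem u).2 Relation.ReflTransGen.refl
  set Sw : Set E := {h | h ∈ K ∧ ∃ z ∈ G.ends h, z ∈ R} with hSw
  have hSwmem : ∀ h, h ∈ Sw ↔ h ∈ K ∧ ∃ z ∈ G.ends h, z ∈ R := fun h => Iff.rfl
  have hclose : ∀ h ∈ Sw, ∀ z ∈ G.ends h, z ∈ R := by
    intro h hh z hz
    obtain ⟨hKh, z0, hz0, hz0R⟩ := (hSwmem h).1 hh
    exact (hRmem z).2 (Relation.ReflTransGen.tail ((hRmem z0).1 hz0R) ⟨h, hKh, hz0, hz⟩)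
  set sw : Fin 3 → Fin 3 := fun a => if a = γ then δ else γ with hsw
  have hswγ : sw γ = δ := by rw [hsw]; simp
  have hswδ : sw δ = γ := by rw [hsw]; simp [hδγ]
  set c2 : E → Fin 3 := fun h => if h ∈ Sw then sw (c h) else c h with hc2
  have hc2pos : ∀ h, h ∈ Sw → c2 h = sw (c h) := by intro h hh; rw [hc2]; simp [hh]
  have hc2neg : ∀ h, h ∉ Sw → c2 h = c h := by intro h hh; rw [hc2]; simp [hh]
  -- the swapped coloring is proper
  have hc2proper : G.IsProperColoring H c2 := by
    intro p hp q hq hpq hadjpq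
    obtain ⟨z, hzp, hzq⟩ := hadjpq
    have hcpq : c p ≠ c q := hc p hp q hq hpq ⟨z, hzp, hzq⟩
    by_cases hpS : p ∈ Sw <;> by_cases hqS : q ∈ Sw
    · rw [hc2pos p hpS, hc2pos q hqS]
      rcases ((hSwmem p).1 hpS).1.2 with h1 | h1 <;> rcases ((hSwmem q).1 hqS).1.2 with h2 | h2
      · exact absurd (h1.trans h2.symm) hcpq
      · rw [h1, h2, hswγ, hswδ]; exact hδγ
      · rw [h1, h2, hswδ, hswγ]; exact Ne.symm hδγ
      · exact absurd (h1.trans h2.symm) hcpq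
    · rw [hc2pos p hpS, hc2neg q hqS]
      have hq_not : ¬(c q = γ ∨ c q = δ) := by
        intro hcol
        exact hqS ((hSwmem q).2 ⟨(hKmem q).2 ⟨hq, hcol⟩, z, hzq, hclose p hpS z hzp⟩)
      push_neg at hq_not
      rcases ((hSwmem p).1 hpS).1.2 with h1 | h1
      · rw [h1, hswγ]; exact Ne.symm hq_not.2
      · rw [h1, hswδ]; exact Ne.symm hq_not.1
    · rw [hc2neg p hpS, hc2pos q hqS]
      have hp_not : ¬(c p = γ ∨ c p = δ) := by
        intro hcol
        exact hpS ((hSwmem p).2 ⟨(hKmem p).2 ⟨hp, hcol⟩, z, hzp, hclose q hqS z hzq⟩)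
      push_neg at hp_not
      rcases ((hSwmem q).1 hqS).1.2 with h1 | h1
      · rw [h1, hswγ]; exact hp_not.2
      · rw [h1, hswδ]; exact hp_not.1
    · rw [hc2neg p hpS, hc2neg q hqS]; exact hcpq
  by_cases hvR : v ∈ R
  · by_cases hxR : x ∈ R
    · -- the counting contradiction: u, v, x are three leaves in one chain component
      obtain ⟨eu, heuH, heuu, heuc⟩ := hδu
      obtain ⟨ev, hevH, hevv, hevc⟩ : γ ∈ G.colorsAt H c v := by rw [hγ]; rfl
      obtain ⟨ex, hexH, hexx, hexc⟩ := hδx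
      refine three_leaves G.ends G.no_loops K ?_ u v x huv hux (Ne.symm hxv)
        ((hRmem v).1 hvR) ((hRmem x).1 hxR) eu ?_ ev ?_ ex ?_
      · intro z h1 h2 h3 k1 k2 k3 m1 m2 m3
        have q1 := ((hKmem h1).1 k1)
        have q2 := ((hKmem h2).1 k2)
        have q3 := ((hKmem h3).1 k3)
        rcases q1.2 with a1 | a1 <;> rcases q2.2 with a2 | a2 <;> rcases q3.2 with a3 | a3
        · exact Or.inl (huniqcol z h1 h2 q1.1 q2.1 m1 m2 (a1.trans a2.symm))
        · exact Or.inl (huniqcol z h1 h2 q1.1 q2.1 m1 m2 (a1.trans a2.symm))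
        · exact Or.inr (Or.inl (huniqcol z h1 h3 q1.1 q3.1 m1 m3 (a1.trans a3.symm)))
        · exact Or.inr (Or.inr (huniqcol z h2 h3 q2.1 q3.1 m2 m3 (a2.trans a3.symm)))
        · exact Or.inr (Or.inr (huniqcol z h2 h3 q2.1 q3.1 m2 m3 (a2.trans a3.symm)))
        · exact Or.inr (Or.inl (huniqcol z h1 h3 q1.1 q3.1 m1 m3 (a1.trans a3.symm)))
        · exact Or.inl (huniqcol z h1 h2 q1.1 q2.1 m1 m2 (a1.trans a2.symm))
        · exact Or.inl (huniqcol z h1 h2 q1.1 q2.1 m1 m2 (a1.trans a2.symm))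
      · refine ⟨(hKmem eu).2 ⟨heuH, Or.inr heuc⟩, heuu, ?_⟩
        intro h hKh hu
        rcases ((hKmem h).1 hKh).2 with hcol | hcol
        · exact absurd ⟨h, ((hKmem h).1 hKh).1, hu, hcol⟩ hγu
        · exact huniqcol u h eu ((hKmem h).1 hKh).1 heuH hu heuu (hcol.trans heuc.symm)
      · refine ⟨(hKmem ev).2 ⟨hevH, Or.inl hevc⟩, hevv, ?_⟩
        intro h hKh hv'
        exact huniqcol v h ev ((hKmem h).1 hKh).1 hevH hv' hevv
          ((hvcol h ((hKmem h).1 hKh).1 hv').trans hevc.symm)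
      · refine ⟨(hKmem ex).2 ⟨hexH, Or.inr hexc⟩, hexx, ?_⟩
        intro h hKh hx'
        rcases ((hKmem h).1 hKh).2 with hcol | hcol
        · exact absurd ⟨h, ((hKmem h).1 hKh).1, hx', hcol⟩ hγx
        · exact huniqcol x h ex ((hKmem h).1 hKh).1 hexH hx' hexx (hcol.trans hexc.symm)
    · -- v ∈ R, x ∉ R : after the swap, γ is free at both v and x; extend with f
      refine extend_contra G H hH.2 c2 hc2proper f hf v x hendsf γ ?_ ?_
      · rintro ⟨h, hh, hvh, hch⟩
        have hcolγ : c h = γ := hvcol h hh hvh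
        have hhSw : h ∈ Sw := (hSwmem h).2 ⟨(hKmem h).2 ⟨hh, Or.inl hcolγ⟩, v, hvh, hvR⟩
        rw [hc2pos h hhSw, hcolγ, hswγ] at hch
        exact hδγ hch
      · rintro ⟨h, hh, hxh, hch⟩
        by_cases hS : h ∈ Sw
        · exact hxR (hclose h hS x hxh)
        · rw [hc2neg h hS] at hch
          exact hγx ⟨h, hh, hxh, hch⟩
  · -- v ∉ R : after the swap, δ is free at both v and u; extend with e
    refine extend_contra G H hH.2 c2 hc2proper e he v u hendse δ ?_ ?_
    · rintro ⟨h, hh, hvh, hch⟩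
      by_cases hS : h ∈ Sw
      · exact hvR (hclose h hS v hvh)
      · rw [hc2neg h hS] at hch
        exact hδγ ((hvcol h hh hvh ▸ hch : (γ : Fin 3) = δ)).symm
    · rintro ⟨h, hh, huh, hch⟩
      by_cases hS : h ∈ Sw
      · rw [hc2pos h hS] at hch
        have hchγ : c h = γ := by
          by_contra hne
          rw [hsw] at hch
          simp only [if_neg hne] at hch
          exact hδγ hch.symm
        exact hγu ⟨h, hh, huh, hchγ⟩
      · rw [hc2neg h hS] at hch
        exact hS ((hSwmem h).2 ⟨(hKmem h).2 ⟨hh, Or.inr hch⟩, u, huh, huR⟩)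
end

section
/- Let G be a cubic graph and let H be a maximum 3-edge-colorable subgraph of G. Then the graph G \ E(H) (the spanning subgraph of G whose edge set is E(G) \ E(H)) contains no path of length three, i.e., there is no sequence of distinct vertices u0, u1, u2, u3 with (u0,u1), (u1,u2), (u2,u3) all in E(G) \ E(H). -/
lemma aux_small {V E : Type} [Fintype E] (G : Multigraph V E) (hG : G.IsCubic)
    (H : Set E) (u : V) (e f : E) (hef : e ≠ f) (heH : e ∉ H) (hfH : f ∉ H)
    (hue : u ∈ G.ends e) (huf : u ∈ G.ends f) :
    {g ∈ H | u ∈ G.ends g}.ncard ≤ 1 := by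
  have hdeg := hG u
  unfold Multigraph.degree Multigraph.degreeIn at hdeg
  have hA : ({g : E | u ∈ G.ends g}).ncard = 3 := by
    simpa using hdeg
  set A := {g : E | u ∈ G.ends g} with hAdef
  have hsub : {g ∈ H | u ∈ G.ends g} ⊆ A \ {e, f} := by
    rintro g ⟨hgH, hg⟩
    refine ⟨hg, ?_⟩
    rintro (rfl | rfl)
    · exact heH hgH
    · exact hfH hgH
  have hef_sub : ({e, f} : Set E) ⊆ A := by
    intro g hg
    simp only [Set.mem_insert_iff, Set.mem_singleton_iff] at hg
    rcases hg with rfl | rfl <;> assumption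
  have hdiff : (A \ ({e, f} : Set E)).ncard = 1 := by
    rw [Set.ncard_diff hef_sub (Set.toFinite _), Set.ncard_pair hef, hA]
  calc {g ∈ H | u ∈ G.ends g}.ncard ≤ (A \ ({e, f} : Set E)).ncard :=
        Set.ncard_le_ncard hsub (Set.toFinite _)
    _ = 1 := hdiff

lemma aux_colors {V E : Type} [Fintype E] (G : Multigraph V E)
    (H : Set E) (c : E → Fin 3) (u : V) :
    (G.colorsAt H c u).ncard ≤ {g ∈ H | u ∈ G.ends g}.ncard := by
  have himg : G.colorsAt H c u = c '' {g ∈ H | u ∈ G.ends g} := by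
    ext γ
    simp only [Multigraph.colorsAt, Set.mem_setOf_eq, Set.mem_image]
    constructor
    · rintro ⟨f, hf, huf, rfl⟩; exact ⟨f, ⟨hf, huf⟩, rfl⟩
    · rintro ⟨f, ⟨hf, huf⟩, rfl⟩; exact ⟨f, hf, huf, rfl⟩
  rw [himg]
  exact Set.ncard_image_le (Set.toFinite _)

/-- If `H` is a maximum 3-edge-colorable subgraph of a cubic graph `G`,
then the spanning subgraph of `G` with edge set `E(G) \ E(H)` contains no path of
length three: there is no sequence of distinct vertices `u₀, u₁, u₂, u₃` joined by
edges `(u₀,u₁), (u₁,u₂), (u₂,u₃)` all lying outside `H`. -/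
theorem complement_of_max_three_colorable_no_path_of_length_three
    {V E : Type} [Fintype V] [Fintype E] (G : Multigraph V E) (hG : G.IsCubic)
    (H : Set E) (hH : G.IsMaxColorable 3 H) :
    ¬ ∃ (u₀ u₁ u₂ u₃ : V) (e₁ e₂ e₃ : E),
        u₀ ≠ u₁ ∧ u₀ ≠ u₂ ∧ u₀ ≠ u₃ ∧ u₁ ≠ u₂ ∧ u₁ ≠ u₃ ∧ u₂ ≠ u₃ ∧
        e₁ ∉ H ∧ e₂ ∉ H ∧ e₃ ∉ H ∧
        G.ends e₁ = s(u₀, u₁) ∧ G.ends e₂ = s(u₁, u₂) ∧ G.ends e₃ = s(u₂, u₃) := by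
  rintro ⟨u₀, u₁, u₂, u₃, e₁, e₂, e₃, h01, h02, h03, h12, h13, h23,
    he1, he2, he3, hE1, hE2, hE3⟩
  obtain ⟨c, hc⟩ := hH.1
  -- e₁ ≠ e₂ and e₂ ≠ e₃
  have he12 : e₁ ≠ e₂ := by
    intro h
    rw [h, hE2] at hE1
    rw [Sym2.eq_iff] at hE1
    tauto
  have he23 : e₂ ≠ e₃ := by
    intro h
    rw [h, hE3] at hE2
    rw [Sym2.eq_iff] at hE2
    tauto
  -- incidences
  have hu1e1 : u₁ ∈ G.ends e₁ := by rw [hE1]; simp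
  have hu1e2 : u₁ ∈ G.ends e₂ := by rw [hE2]; simp
  have hu2e2 : u₂ ∈ G.ends e₂ := by rw [hE2]; simp
  have hu2e3 : u₂ ∈ G.ends e₃ := by rw [hE3]; simp
  -- few colors at u₁ and u₂
  have hcol1 : (G.colorsAt H c u₁).ncard ≤ 1 :=
    le_trans (aux_colors G H c u₁) (aux_small G hG H u₁ e₁ e₂ he12 he1 he2 hu1e1 hu1e2)
  have hcol2 : (G.colorsAt H c u₂).ncard ≤ 1 :=
    le_trans (aux_colors G H c u₂) (aux_small G hG H u₂ e₂ e₃ he23 he2 he3 hu2e2 hu2e3)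
  -- find a free color γ
  set S : Set (Fin 3) := G.colorsAt H c u₁ ∪ G.colorsAt H c u₂ with hSdef
  have hScard : S.ncard ≤ 2 := by
    calc S.ncard ≤ (G.colorsAt H c u₁).ncard + (G.colorsAt H c u₂).ncard :=
          Set.ncard_union_le _ _
      _ ≤ 2 := by omega
  have hSne : S ≠ Set.univ := by
    intro h
    have : (Set.univ : Set (Fin 3)).ncard = 3 := by simp [Set.ncard_univ]
    rw [h, this] at hScard
    omega
  obtain ⟨γ, hγ⟩ := Set.ne_univ_iff_exists_notMem S |>.mp hSne
  have hγ1 : γ ∉ G.colorsAt H c u₁ := fun h => hγ (Set.mem_union_left _ h)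
  have hγ2 : γ ∉ G.colorsAt H c u₂ := fun h => hγ (Set.mem_union_right _ h)
  -- the modified coloring
  classical
  set c' : E → Fin 3 := Function.update c e₂ γ with hc'def
  have hc'e₂ : c' e₂ = γ := Function.update_self _ _ _
  have hc'other : ∀ g ∈ H, c' g = c g := by
    intro g hg
    apply Function.update_of_ne
    intro h
    exact he2 (h ▸ hg)
  -- key: an edge of H sharing an endpoint with e₂ does not get color γ
  have hkey : ∀ g ∈ H, G.EdgeAdj e₂ g → c g ≠ γ := by
    rintro g hg ⟨v, hve2, hvg⟩ hcg
    rw [hE2, Sym2.mem_iff] at hve2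
    rcases hve2 with rfl | rfl
    · exact hγ1 ⟨g, hg, hvg, hcg⟩
    · exact hγ2 ⟨g, hg, hvg, hcg⟩
  -- insert e₂ H is 3-colorable
  have hcolorable : G.Colorable 3 (insert e₂ H) := by
    refine ⟨c', ?_⟩
    intro e he f hf hef hadj
    rcases he with rfl | heH
    · rcases hf with rfl | hfH
      · exact absurd rfl hef
      · rw [hc'e₂, hc'other f hfH]
        exact fun h => hkey f hfH hadj h.symm
    · rcases hf with rfl | hfH
      · rw [hc'e₂, hc'other e heH]
        have hadj' : G.EdgeAdj f e := by
          obtain ⟨v, hv1, hv2⟩ := hadj; exact ⟨v, hv2, hv1⟩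
        exact fun h => hkey e heH hadj' h
      · rw [hc'other e heH, hc'other f hfH]
        exact hc e heH f hfH hef hadj
  -- contradiction with maximality
  have hle := hH.2 _ hcolorable
  rw [Set.ncard_insert_of_notMem he2 (Set.toFinite H)] at hle
  omega
end

section
/- Let G be a cubic graph, let H be a maximum 3-edge-colorable subgraph of G properly colored with colors {1,2,3}, and let e = (u,v) be an edge of G not belonging to H. For a vertex w, let C(w) denote the set of colors appearing on the edges of H incident to w. Then |C(u) ∩ C(v)| = 1 and C(u) ∪ C(v) = {1,2,3}; in particular |C(u)| = |C(v)| = 2. -/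
/-!
Adding `e` with a colour missing at both of its ends would enlarge `H`, so `C(u) ∪ C(v)` contains
every colour; as `e ∉ H`, each end has at most two colours, and it remains to exclude
`C(u) = {α}`. Then `u` has a single edge `f` in `H`, of colour `α`, and a second uncoloured edge
`g = ux`, and `α` is missing at both `v` and `x`. Swapping `α` and another colour `β` on the
`α`-`β` Kempe chain through `f` leaves only `β` at `u`; if the chain missed `v` (or `x`), `α`
would still be free there and `e` (or `g`) could be added. So the chain reaches `v` and `x`,
where it ends since they miss `α`. But the chain is a path, and it cannot have the three ends
`u`, `v`, `x`.
-/

open Function Relation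

namespace Multigraph

variable {V E : Type} {G : Multigraph V E}

theorem EdgeAdj.symm {a b : E} (h : G.EdgeAdj a b) : G.EdgeAdj b a :=
  let ⟨w, ha, hb⟩ := h
  ⟨w, hb, ha⟩

theorem ne_of_ends_eq {e : E} {u v : V} (h : G.ends e = s(u, v)) : u ≠ v :=
  fun huv => G.no_loops e (h ▸ Sym2.mk_isDiag_iff.mpr huv)

theorem degreeIn_mono [Finite E] {S T : Set E} (hST : S ⊆ T) (w : V) :
    G.degreeIn S w ≤ G.degreeIn T w :=
  Set.ncard_le_ncard fun _ h => ⟨hST h.1, h.2⟩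

theorem one_le_degreeIn [Finite E] {S : Set E} {e : E} {w : V} (he : e ∈ S)
    (hw : w ∈ G.ends e) : 1 ≤ G.degreeIn S w :=
  (Set.ncard_pos).mpr ⟨e, he, hw⟩

theorem degreeIn_add_degreeIn_compl [Finite E] (S : Set E) (w : V) :
    G.degreeIn S w + G.degreeIn Sᶜ w = G.degree w := by
  have := Set.ncard_inter_add_ncard_sdiff_eq_ncard {e | w ∈ G.ends e} S
  unfold degree degreeIn
  convert this using 3 <;> ext <;> simp [and_comm]

theorem degreeIn_sdiff_singleton_of_notMem {S : Set E} {f : E} {w : V} (hw : w ∉ G.ends f) :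
    G.degreeIn (S \ {f}) w = G.degreeIn S w := by
  unfold degreeIn
  congr 1
  ext e
  simp only [Set.mem_ofPred_eq, Set.mem_sdiff, Set.mem_singleton_iff]
  exact ⟨fun h => ⟨h.1.1, h.2⟩, fun h => ⟨⟨h.1, by rintro rfl; exact hw h.2⟩, h.2⟩⟩

theorem degreeIn_sdiff_singleton_add_one [Finite E] {S : Set E} {f : E} {w : V} (hf : f ∈ S)
    (hw : w ∈ G.ends f) : G.degreeIn (S \ {f}) w + 1 = G.degreeIn S w := by
  unfold degreeIn
  have hsep : {e ∈ S \ {f} | w ∈ G.ends e} = {e ∈ S | w ∈ G.ends e} \ {f} := by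
    ext e
    simp only [Set.mem_ofPred_eq, Set.mem_sdiff, Set.mem_singleton_iff]
    tauto
  have hfw : f ∈ {e ∈ S | w ∈ G.ends e} := ⟨hf, hw⟩
  rw [hsep, Set.ncard_sdiff_singleton_add_one hfw]

theorem IsCubic.degreeIn_le_two [Finite E] (hG : G.IsCubic) {S : Set E} {e : E} (he : e ∉ S)
    {w : V} (hw : w ∈ G.ends e) : G.degreeIn S w ≤ 2 := by
  have := degreeIn_add_degreeIn_compl (G := G) S w
  have := one_le_degreeIn (S := Sᶜ) he hw
  rw [hG w] at *
  omega

def AdjIn (G : Multigraph V E) (S : Set E) (a b : E) : Prop :=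
  a ∈ S ∧ b ∈ S ∧ G.EdgeAdj a b

def EdgeConnected (G : Multigraph V E) (S : Set E) : Prop :=
  ∀ a ∈ S, ∀ b ∈ S, ReflTransGen (G.AdjIn S) a b

def edgeComponent (G : Multigraph V E) (S : Set E) (f : E) : Set E :=
  {h ∈ S | ReflTransGen (G.AdjIn S) f h}

theorem AdjIn.symm {S : Set E} {a b : E} (h : G.AdjIn S a b) : G.AdjIn S b a :=
  ⟨h.2.1, h.1, h.2.2.symm⟩

theorem mem_edgeComponent_self {S : Set E} {f : E} (hf : f ∈ S) : f ∈ G.edgeComponent S f :=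
  ⟨hf, .refl⟩

theorem mem_edgeComponent_of_adj {S : Set E} {f p q : E} (hp : p ∈ G.edgeComponent S f)
    (hq : q ∈ S) (hpq : G.EdgeAdj p q) : q ∈ G.edgeComponent S f :=
  ⟨hq, hp.2.tail ⟨hp.1, hq, hpq⟩⟩

theorem reflTransGen_adjIn_edgeComponent {S : Set E} {f b : E}
    (h : ReflTransGen (G.AdjIn S) f b) : ReflTransGen (G.AdjIn (G.edgeComponent S f)) f b := by
  induction h with
  | refl => exact .refl
  | tail hfc hcb ih => exact ih.tail ⟨⟨hcb.1, hfc⟩, ⟨hcb.2.1, hfc.tail hcb⟩, hcb.2.2⟩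

theorem edgeConnected_edgeComponent (S : Set E) (f : E) :
    G.EdgeConnected (G.edgeComponent S f) := by
  rintro a ⟨-, ha⟩ b ⟨-, hb⟩
  have : Std.Symm (G.AdjIn (G.edgeComponent S f)) := ⟨fun _ _ h => h.symm⟩
  exact (Std.Symm.symm _ _ (reflTransGen_adjIn_edgeComponent ha)).trans
    (reflTransGen_adjIn_edgeComponent hb)

theorem EdgeConnected.exists_adj_of_ne {K : Set E} (hK : G.EdgeConnected K) {f h₀ : E}
    (hf : f ∈ K) (hh₀ : h₀ ∈ K) (hne : h₀ ≠ f) :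
    ∃ h ∈ K, h ≠ f ∧ G.EdgeAdj f h := by
  by_contra! hno
  have hstuck : ∀ b, ReflTransGen (G.AdjIn K) f b → b = f := by
    intro b hb
    induction hb with
    | refl => rfl
    | tail _ hcb ih =>
      subst ih
      by_contra hbf
      exact hno _ hcb.2.1 hbf hcb.2.2
  exact hne (hstuck h₀ (hK f hf h₀ hh₀))

theorem mem_ends_of_adj_of_leaf {K : Set E} {f b : E} {u w : V} (hfw : G.ends f = s(u, w))
    (hf : {h ∈ K | u ∈ G.ends h} = {f}) (hb : b ∈ K) (hbf : b ≠ f) (hadj : G.EdgeAdj f b) :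
    w ∈ G.ends b := by
  obtain ⟨z, hzf, hzb⟩ := hadj
  rw [hfw, Sym2.mem_iff] at hzf
  rcases hzf with rfl | rfl
  · have : b ∈ ({f} : Set E) := hf ▸ ⟨hb, hzb⟩
    exact absurd this hbf
  · exact hzb

theorem EdgeConnected.sdiff_singleton_of_leaf {K : Set E} (hK : G.EdgeConnected K) {f h₁ : E}
    {u w : V} (hfw : G.ends f = s(u, w)) (hf : {h ∈ K | u ∈ G.ends h} = {f})
    (hh₁ : h₁ ∈ K) (hh₁f : h₁ ≠ f) (hadj : G.EdgeAdj f h₁) :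
    G.EdgeConnected (K \ {f}) := by
  classical
  -- every neighbour of the leaf edge `f` passes through `w`, so `h₁` can stand in for `f`
  have hw : ∀ b ∈ K, b ≠ f → G.EdgeAdj f b → w ∈ G.ends b :=
    fun b hb hbf => mem_ends_of_adj_of_leaf hfw hf hb hbf
  let φ : E → E := update id f h₁
  have hφK : ∀ b ∈ K, φ b ∈ K \ {f} := by
    intro b hb
    by_cases hbf : b = f
    · simp [φ, hbf, hh₁, hh₁f]
    · simp [φ, hbf, hb]
  have hφw : ∀ b ∈ K, (b = f ∨ G.EdgeAdj f b) → w ∈ G.ends (φ b) := by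
    intro b hb hfb
    by_cases hbf : b = f
    · simpa [φ, hbf] using hw h₁ hh₁ hh₁f hadj
    · simpa [φ, hbf] using hw b hb hbf (hfb.resolve_left hbf)
  have hstep : ∀ a b, G.AdjIn K a b → G.AdjIn (K \ {f}) (φ a) (φ b) := by
    rintro a b ⟨ha, hb, hab⟩
    refine ⟨hφK a ha, hφK b hb, ?_⟩
    by_cases haf : a = f
    · exact ⟨w, hφw a ha (.inl haf), hφw b hb (.inr (haf ▸ hab))⟩
    by_cases hbf : b = f
    · exact ⟨w, hφw a ha (.inr (hbf ▸ hab.symm)), hφw b hb (.inl hbf)⟩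
    simpa [φ, haf, hbf] using hab
  rintro a ⟨ha, haf⟩ b ⟨hb, hbf⟩
  simpa only [onFun, φ, update_of_ne haf, update_of_ne hbf, id] using
    ReflTransGen.lift φ hstep a b (hK a ha b hb)

theorem EdgeConnected.eq_of_degreeIn_eq_one [Finite E] {K : Set E} (hK : G.EdgeConnected K)
    (hdeg : ∀ y, G.degreeIn K y ≤ 2) {u v x : V} (hu : G.degreeIn K u = 1)
    (hv : G.degreeIn K v = 1) (hx : G.degreeIn K x = 1) (huv : u ≠ v) (hux : u ≠ x) :
    v = x := by
  induction hn : K.ncard using Nat.strong_induction_on generalizing K u v x with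
  | _ n ih =>
  -- delete the pendant edge `f = uw`: then `w`, `v`, `x` are leaves of a smaller connected set
  obtain ⟨f, hf⟩ := Set.ncard_eq_one.mp hu
  have hfK : f ∈ K ∧ u ∈ G.ends f := (Set.ext_iff.mp hf f).mpr rfl
  obtain ⟨w, hfw⟩ : ∃ w, G.ends f = s(u, w) := ⟨_, (Sym2.other_spec hfK.2).symm⟩
  have hleaf : ∀ y, G.degreeIn K y = 1 → ∃ h ∈ K, y ∈ G.ends h := fun y hy =>
    (Set.ncard_pos).mp (show 0 < G.degreeIn K y by omega)
  by_cases hsingle : ∃ h₀ ∈ K, h₀ ≠ f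
  swap
  · have hends : ∀ y, G.degreeIn K y = 1 → y ≠ u → y = w := by
      intro y hy hyu
      obtain ⟨h, hh, hyh⟩ := hleaf y hy
      have hhf : h = f := of_not_not fun hhf => hsingle ⟨h, hh, hhf⟩
      rw [hhf, hfw, Sym2.mem_iff] at hyh
      exact hyh.resolve_left hyu
    rw [hends v hv huv.symm, hends x hx hux.symm]
  obtain ⟨h₀, hh₀, hh₀f⟩ := hsingle
  obtain ⟨h₁, hh₁, hh₁f, hadj⟩ := hK.exists_adj_of_ne hfK.1 hh₀ hh₀f
  have hw₁ : w ∈ G.ends h₁ := mem_ends_of_adj_of_leaf hfw hf hh₁ hh₁f hadj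
  have hw : G.degreeIn K w = 2 := by
    refine le_antisymm (hdeg w) ((Set.one_lt_ncard (Set.toFinite _)).mpr ?_)
    exact ⟨f, ⟨hfK.1, hfw ▸ Sym2.mem_mk_right u w⟩, h₁, ⟨hh₁, hw₁⟩, hh₁f.symm⟩
  have hnotMem : ∀ y, G.degreeIn K y = 1 → u ≠ y → y ∉ G.ends f := by
    intro y hy huy hyf
    rw [hfw, Sym2.mem_iff] at hyf
    rcases hyf with rfl | rfl
    exacts [huy rfl, by omega]
  have hvw : v ≠ w := fun h => by rw [h] at hv; omega
  have hxw : x ≠ w := fun h => by rw [h] at hx; omega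
  refine ih _ (hn ▸ Set.ncard_sdiff_singleton_lt_of_mem hfK.1)
    (hK.sdiff_singleton_of_leaf hfw hf hh₁ hh₁f hadj)
    (fun y => (degreeIn_mono Set.sdiff_subset y).trans (hdeg y)) ?_
    ((degreeIn_sdiff_singleton_of_notMem (hnotMem v hv huv)).trans hv)
    ((degreeIn_sdiff_singleton_of_notMem (hnotMem x hx hux)).trans hx) hvw.symm hxw.symm rfl
  have := degreeIn_sdiff_singleton_add_one hfK.1 (hfw ▸ Sym2.mem_mk_right u w : w ∈ G.ends f)
  omega

section Coloring

variable {k : ℕ} {H : Set E} {c : E → Fin k}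

theorem colorsAt_eq_image (w : V) : G.colorsAt H c w = c '' {h ∈ H | w ∈ G.ends h} := by
  ext γ
  simp only [colorsAt, Set.mem_ofPred_eq, Set.mem_image]
  tauto

theorem IsProperColoring.injOn_incident (hc : G.IsProperColoring H c) (w : V) :
    Set.InjOn c {h ∈ H | w ∈ G.ends h} := fun a ha b hb hab => by
  by_contra hne
  exact hc a ha.1 b hb.1 hne ⟨w, ha.2, hb.2⟩ hab

theorem IsProperColoring.ncard_colorsAt (hc : G.IsProperColoring H c) (w : V) :
    (G.colorsAt H c w).ncard = G.degreeIn H w := by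
  rw [colorsAt_eq_image, (hc.injOn_incident w).ncard_image]
  rfl

theorem IsProperColoring.degreeIn_le_ncard (hc : G.IsProperColoring H c) {S : Set E}
    (hSH : S ⊆ H) {T : Set (Fin k)} {w : V} (hT : ∀ h ∈ S, w ∈ G.ends h → c h ∈ T) :
    G.degreeIn S w ≤ T.ncard :=
  Set.ncard_le_ncard_of_injOn c (fun h hh => hT h hh.1 hh.2)
    ((hc.injOn_incident w).mono
      (show {h ∈ S | w ∈ G.ends h} ⊆ {h ∈ H | w ∈ G.ends h} from
        fun _ hh => ⟨hSH hh.1, hh.2⟩))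

theorem IsProperColoring.update_insert [DecidableEq E] (hc : G.IsProperColoring H c) {e : E}
    (he : e ∉ H) {u v : V} (hends : G.ends e = s(u, v)) {γ : Fin k}
    (hγ : γ ∉ G.colorsAt H c u ∪ G.colorsAt H c v) :
    G.IsProperColoring (insert e H) (update c e γ) := by
  have hfresh : ∀ b ∈ H, G.EdgeAdj e b → update c e γ b ≠ γ := by
    rintro b hb ⟨z, hze, hzb⟩ hcb
    rw [update_of_ne (ne_of_mem_of_not_mem hb he)] at hcb
    rw [hends, Sym2.mem_iff] at hze
    rcases hze with rfl | rfl
    exacts [hγ (Or.inl ⟨b, hb, hzb, hcb⟩), hγ (Or.inr ⟨b, hb, hzb, hcb⟩)]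
  rintro a (rfl | ha) b (rfl | hb) hab hadj
  · exact absurd rfl hab
  · rw [update_self]
    exact (hfresh b hb hadj).symm
  · rw [update_self]
    exact hfresh a ha hadj.symm
  · rw [update_of_ne (ne_of_mem_of_not_mem ha he), update_of_ne (ne_of_mem_of_not_mem hb he)]
    exact hc a ha b hb hab hadj

theorem IsMaxColorable.not_colorable_insert [Finite E] (hH : G.IsMaxColorable k H) {e : E}
    (he : e ∉ H) : ¬ G.Colorable k (insert e H) := fun hcol => by
  have := hH.2 _ hcol
  rw [Set.ncard_insert_of_notMem he] at this
  omega

theorem IsMaxColorable.colorsAt_union_eq_univ [Finite E] (hH : G.IsMaxColorable k H)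
    (hc : G.IsProperColoring H c) {e : E} (he : e ∉ H) {u v : V} (hends : G.ends e = s(u, v)) :
    G.colorsAt H c u ∪ G.colorsAt H c v = Set.univ := by
  classical
  exact Set.eq_univ_of_forall fun _ =>
    by_contra fun hγ => hH.not_colorable_insert he ⟨_, hc.update_insert he hends hγ⟩

open scoped Classical in
noncomputable def kempeSwap (K : Set E) (c : E → Fin k) (α β : Fin k) (h : E) : Fin k :=
  if h ∈ K then Equiv.swap α β (c h) else c h

def kempeChain (G : Multigraph V E) (H : Set E) (c : E → Fin k) (α β : Fin k) (f : E) :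
    Set E :=
  G.edgeComponent {h ∈ H | c h = α ∨ c h = β} f

theorem isProperColoring_kempeSwap (hc : G.IsProperColoring H c) {K : Set E} {α β : Fin k}
    (hK : ∀ p ∈ K, ∀ q ∈ H, G.EdgeAdj p q → (c q = α ∨ c q = β) → q ∈ K) :
    G.IsProperColoring H (kempeSwap K c α β) := by
  -- a neighbour of `K` outside `K` has a colour other than `α`, `β`, which the swap fixes
  have hswap : ∀ p ∈ K, ∀ q ∈ H, G.EdgeAdj p q →
      kempeSwap K c α β q = Equiv.swap α β (c q) := by
    intro p hp q hq hpq
    by_cases hqK : q ∈ K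
    · exact if_pos hqK
    · rw [kempeSwap, if_neg hqK, Equiv.swap_apply_of_ne_of_ne] <;> intro h <;>
        exact hqK (hK p hp q hq hpq (by simp [h]))
  intro a ha b hb hab hadj
  by_cases haK : a ∈ K
  · rw [kempeSwap, if_pos haK, hswap a haK b hb hadj]
    exact (Equiv.injective _).ne (hc a ha b hb hab hadj)
  by_cases hbK : b ∈ K
  · rw [hswap b hbK a ha hadj.symm, kempeSwap, if_pos hbK]
    exact (Equiv.injective _).ne (hc a ha b hb hab hadj)
  rw [kempeSwap, kempeSwap, if_neg haK, if_neg hbK]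
  exact hc a ha b hb hab hadj

theorem isProperColoring_kempeSwap_kempeChain (hc : G.IsProperColoring H c) (α β : Fin k)
    (f : E) : G.IsProperColoring H (kempeSwap (G.kempeChain H c α β f) c α β) :=
  isProperColoring_kempeSwap hc fun _ hp _ hq hpq hcq =>
    mem_edgeComponent_of_adj hp ⟨hq, hcq⟩ hpq

theorem IsProperColoring.degreeIn_kempeChain_le_two [Finite E] (hc : G.IsProperColoring H c)
    (α β : Fin k) (f : E) (y : V) : G.degreeIn (G.kempeChain H c α β f) y ≤ 2 :=
  (hc.degreeIn_le_ncard (T := {α, β}) (fun _ h => h.1.1) fun _ h _ => h.1.2).trans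
    ((Set.ncard_insert_le α {β}).trans (by simp))

theorem IsProperColoring.degreeIn_kempeChain_le_one [Finite E] (hc : G.IsProperColoring H c)
    {α : Fin k} (β : Fin k) (f : E) {y : V} (hy : α ∉ G.colorsAt H c y) :
    G.degreeIn (G.kempeChain H c α β f) y ≤ 1 :=
  (hc.degreeIn_le_ncard (T := {β}) (fun _ h => h.1.1) fun h hh hyh =>
    hh.1.2.resolve_left fun hα => hy ⟨h, hh.1.1, hyh, hα⟩).trans (Set.ncard_singleton β).le

theorem IsMaxColorable.exists_mem_kempeChain [Finite E] (hH : G.IsMaxColorable k H)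
    (hc : G.IsProperColoring H c) {f e : E} {u y : V} (hf : {h ∈ H | u ∈ G.ends h} = {f})
    {β : Fin k} (hβ : β ≠ c f) (he : e ∉ H) (hends : G.ends e = s(u, y))
    (hy : c f ∉ G.colorsAt H c y) : ∃ h ∈ G.kempeChain H c (c f) β f, y ∈ G.ends h := by
  have hfH : f ∈ H ∧ u ∈ G.ends f := (Set.ext_iff.mp hf f).mpr rfl
  set K := G.kempeChain H c (c f) β f
  have hfK : f ∈ K := mem_edgeComponent_self ⟨hfH.1, .inl rfl⟩
  have hc' := isProperColoring_kempeSwap_kempeChain hc (c f) β f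
  have hcf : c f ∈ _ := (hH.colorsAt_union_eq_univ hc' he hends).symm ▸ Set.mem_univ (c f)
  obtain ⟨h, hhH, hu, hch⟩ | ⟨h, hhH, hyh, hch⟩ := hcf
  · -- after the swap the only edge at `u` has colour `β`
    have hhf : h ∈ ({f} : Set E) := hf ▸ ⟨hhH, hu⟩
    rw [Set.mem_singleton_iff.mp hhf, kempeSwap, if_pos hfK, Equiv.swap_apply_left] at hch
    exact absurd hch hβ
  · by_cases hhK : h ∈ K
    · exact ⟨h, hhK, hyh⟩
    · rw [kempeSwap, if_neg hhK] at hch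
      exact absurd ⟨h, hhH, hyh, hch⟩ hy

end Coloring

section Cubic

variable [Finite E] {H : Set E} {c : E → Fin 3}

theorem IsCubic.exists_ne_notMem_of_degreeIn_eq_one (hG : G.IsCubic) {u : V}
    (hu : G.degreeIn H u = 1) (e : E) : ∃ g x, g ∉ H ∧ g ≠ e ∧ G.ends g = s(u, x) := by
  have h := degreeIn_add_degreeIn_compl (G := G) H u
  rw [hG u, hu] at h
  obtain ⟨g, ⟨hgH, hgu⟩, hge⟩ :=
    Set.exists_ne_of_one_lt_ncard (show 1 < G.degreeIn Hᶜ u by omega) e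
  exact ⟨g, _, hgH, hge, (Sym2.other_spec hgu).symm⟩

theorem IsCubic.colorsAt_eq_compl_singleton (hG : G.IsCubic) (hH : G.IsMaxColorable 3 H)
    (hc : G.IsProperColoring H c) {e : E} (he : e ∉ H) {u y : V} (hends : G.ends e = s(u, y))
    {α : Fin 3} (hu : G.colorsAt H c u = {α}) : G.colorsAt H c y = {α}ᶜ := by
  have hy : (G.colorsAt H c y).ncard ≤ 2 :=
    hc.ncard_colorsAt y ▸ hG.degreeIn_le_two he (hends ▸ Sym2.mem_mk_right u y)
  have hunion := hH.colorsAt_union_eq_univ hc he hends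
  rw [hu] at hunion
  have hα : α ∉ G.colorsAt H c y := fun hα => by
    rw [Set.union_eq_self_of_subset_left (Set.singleton_subset_iff.mpr hα)] at hunion
    rw [hunion, Set.ncard_univ, Nat.card_eq_fintype_card, Fintype.card_fin] at hy
    omega
  ext γ
  rw [Set.mem_compl_singleton_iff]
  refine ⟨fun hγ h => hα (h ▸ hγ), fun hγ => ?_⟩
  have : γ ∈ {α} ∪ G.colorsAt H c y := hunion ▸ Set.mem_univ γ
  exact this.resolve_left hγ

theorem IsCubic.degreeIn_ne_one (hG : G.IsCubic) (hH : G.IsMaxColorable 3 H)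
    (hc : G.IsProperColoring H c) {e : E} (he : e ∉ H) {u v : V} (hends : G.ends e = s(u, v)) :
    G.degreeIn H u ≠ 1 := by
  intro hu
  obtain ⟨f, hf⟩ := Set.ncard_eq_one.mp hu
  have hfH : f ∈ H ∧ u ∈ G.ends f := (Set.ext_iff.mp hf f).mpr rfl
  have hCu : G.colorsAt H c u = {c f} := by rw [colorsAt_eq_image, hf, Set.image_singleton]
  obtain ⟨g, x, hgH, hge, hgends⟩ := hG.exists_ne_notMem_of_degreeIn_eq_one hu e
  have hCv := hG.colorsAt_eq_compl_singleton hH hc he hends hCu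
  have hCx := hG.colorsAt_eq_compl_singleton hH hc hgH hgends hCu
  have hvx : v ≠ x := by
    rintro rfl
    -- `v` would carry the two uncoloured edges `e`, `g` and two coloured ones
    have hcol : G.degreeIn H v = 2 := by
      have := Set.ncard_add_ncard_compl ({c f} : Set (Fin 3))
      rw [← hc.ncard_colorsAt, hCv]
      simp only [Set.ncard_singleton, Nat.card_eq_fintype_card, Fintype.card_fin] at this
      omega
    have hunc : 1 < G.degreeIn Hᶜ v := (Set.one_lt_ncard).mpr
      ⟨e, ⟨he, hends ▸ Sym2.mem_mk_right u v⟩,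
        g, ⟨hgH, hgends ▸ Sym2.mem_mk_right u v⟩, hge.symm⟩
    have := degreeIn_add_degreeIn_compl (G := G) H v
    rw [hG v] at this
    omega
  obtain ⟨β, hβ⟩ := exists_ne (c f)
  set K := G.kempeChain H c (c f) β f
  have hleaf : ∀ y, c f ∉ G.colorsAt H c y → (∃ h ∈ K, y ∈ G.ends h) →
      G.degreeIn K y = 1 :=
    fun y hy ⟨h, hh, hyh⟩ =>
      le_antisymm (hc.degreeIn_kempeChain_le_one β f hy) (one_le_degreeIn hh hyh)
  have hαv : c f ∉ G.colorsAt H c v := by simp [hCv]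
  have hαx : c f ∉ G.colorsAt H c x := by simp [hCx]
  exact hvx <| (edgeConnected_edgeComponent _ _).eq_of_degreeIn_eq_one
    (hc.degreeIn_kempeChain_le_two _ _ _)
    (le_antisymm (hu ▸ degreeIn_mono (fun _ h => h.1.1) u)
      (one_le_degreeIn (mem_edgeComponent_self ⟨hfH.1, .inl rfl⟩) hfH.2))
    (hleaf v hαv (hH.exists_mem_kempeChain hc hf hβ he hends hαv))
    (hleaf x hαx (hH.exists_mem_kempeChain hc hf hβ hgH hgends hαx))
    (ne_of_ends_eq hends) (ne_of_ends_eq hgends)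

theorem IsCubic.ncard_colorsAt_eq_two (hG : G.IsCubic) (hH : G.IsMaxColorable 3 H)
    (hc : G.IsProperColoring H c) {e : E} (he : e ∉ H) {u v : V} (hends : G.ends e = s(u, v)) :
    (G.colorsAt H c u).ncard = 2 := by
  have hu := hG.degreeIn_le_two he (hends ▸ Sym2.mem_mk_left u v)
  have hv := hG.degreeIn_le_two he (hends ▸ Sym2.mem_mk_right u v)
  have hne := hG.degreeIn_ne_one hH hc he hends
  have hcover : 3 ≤ (G.colorsAt H c u).ncard + (G.colorsAt H c v).ncard :=
    calc 3 = (G.colorsAt H c u ∪ G.colorsAt H c v).ncard := by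
          rw [hH.colorsAt_union_eq_univ hc he hends, Set.ncard_univ, Nat.card_eq_fintype_card,
            Fintype.card_fin]
      _ ≤ _ := Set.ncard_union_le _ _
  simp only [hc.ncard_colorsAt] at hcover ⊢
  omega

end Cubic

end Multigraph

theorem colors_at_endpoints_of_uncolored_edge_general
    {V E : Type} [Fintype E] (G : Multigraph V E) (hG : G.IsCubic)
    (H : Set E) (hH : G.IsMaxColorable 3 H)
    (c : E → Fin 3) (hc : G.IsProperColoring H c)
    (e : E) (he : e ∉ H) (u v : V) (hends : G.ends e = s(u, v)) :
    (G.colorsAt H c u ∩ G.colorsAt H c v).ncard = 1 ∧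
    G.colorsAt H c u ∪ G.colorsAt H c v = Set.univ ∧
    (G.colorsAt H c u).ncard = 2 ∧ (G.colorsAt H c v).ncard = 2 := by
  have hu := hG.ncard_colorsAt_eq_two hH hc he hends
  have hv := hG.ncard_colorsAt_eq_two hH hc he (hends.trans Sym2.eq_swap)
  have hunion := hH.colorsAt_union_eq_univ hc he hends
  have hincl := Set.ncard_inter_add_ncard_union (G.colorsAt H c u) (G.colorsAt H c v)
  rw [hunion, hu, hv, Set.ncard_univ, Nat.card_eq_fintype_card, Fintype.card_fin] at hincl
  exact ⟨by omega, hunion, hu, hv⟩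

/-- Let `H` be a maximum 3-edge-colorable subgraph of a cubic graph `G`,
properly colored by `c` with the three colors, and let `e = (u,v)` be an edge of `G`
not in `H`.  Writing `C(w)` for the set of colors on edges of `H` incident to `w`,
we have `|C(u) ∩ C(v)| = 1`, `C(u) ∪ C(v) = {1,2,3}`, and `|C(u)| = |C(v)| = 2`. -/
theorem colors_at_endpoints_of_uncolored_edge
    {V E : Type} [Fintype V] [Fintype E] (G : Multigraph V E) (hG : G.IsCubic)
    (H : Set E) (hH : G.IsMaxColorable 3 H)
    (c : E → Fin 3) (hc : G.IsProperColoring H c)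
    (e : E) (he : e ∉ H) (u v : V) (hends : G.ends e = s(u, v)) :
    (G.colorsAt H c u ∩ G.colorsAt H c v).ncard = 1 ∧
    G.colorsAt H c u ∪ G.colorsAt H c v = Set.univ ∧
    (G.colorsAt H c u).ncard = 2 ∧ (G.colorsAt H c v).ncard = 2 :=
  colors_at_endpoints_of_uncolored_edge_general G hG H hH c hc e he u v hends
end

section
/- Let G be a cubic graph containing a triangle T on three distinct vertices such that no two vertices of T are joined by a multiple edge, and let G' be the cubic graph obtained from G by contracting the triangle T to a single new vertex (deleting the three triangle edges and merging the three vertices). Then |V(G')| = |V(G)| − 2, ν₂(G) ≥ ν₂(G') + 2, and ν₃(G) ≥ ν₃(G') + 3. -/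
private lemma fin2choice : ∀ (sa sd : Bool) (a d : Fin 2), (sa = true → sd = true → a ≠ d) →
    ∃ p q : Fin 2, p ≠ q ∧ (sa = true → p ≠ a) ∧ (sd = true → q ≠ d) := by decide

private lemma fin3choice : ∀ (sa sb sd : Bool) (a b d : Fin 3),
    ((sa = true → sb = true → a ≠ b) ∧ (sb = true → sd = true → b ≠ d) ∧
      (sa = true → sd = true → a ≠ d)) →
    ∃ a' b' d' : Fin 3, a' ≠ b' ∧ b' ≠ d' ∧ a' ≠ d' ∧
      (sa = true → a' = a) ∧ (sb = true → b' = b) ∧ (sd = true → d' = d) := by decide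

private lemma fin2pigeon : ∀ a b c : Fin 2, a ≠ b → b ≠ c → a ≠ c → False := by decide

lemma Multigraph.pendant {V E : Type} [Fintype E] (G : Multigraph V E) (hG : G.IsCubic)
    (x : V) (e₁ e₃ : E) (h13 : e₁ ≠ e₃) (hx1 : x ∈ G.ends e₁) (hx3 : x ∈ G.ends e₃) :
    ∃ f : E, x ∈ G.ends f ∧ f ≠ e₁ ∧ f ≠ e₃ ∧
      ∀ g : E, x ∈ G.ends g → g = e₁ ∨ g = e₃ ∨ g = f := by
  have hA : {e : E | x ∈ G.ends e}.ncard = 3 := by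
    have h := hG x
    simpa [Multigraph.degree, Multigraph.degreeIn, Set.sep_univ] using h
  have hsub : ({e₁, e₃} : Set E) ⊆ {e : E | x ∈ G.ends e} := by
    intro g hg
    rcases hg with rfl | hg
    · exact hx1
    · rw [Set.mem_singleton_iff] at hg; subst hg; exact hx3
  have hd : ({e : E | x ∈ G.ends e} \ {e₁, e₃}).ncard = 1 := by
    rw [Set.ncard_diff hsub (Set.toFinite _), hA, Set.ncard_pair h13]
  obtain ⟨f, hf⟩ := Set.ncard_eq_one.mp hd
  have hfmem : f ∈ {e : E | x ∈ G.ends e} \ {e₁, e₃} := by rw [hf]; rfl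
  refine ⟨f, hfmem.1, ?_, ?_, ?_⟩
  · intro h; exact hfmem.2 (by simp [h])
  · intro h; exact hfmem.2 (by simp [h])
  · intro g hg
    by_cases h1 : g = e₁
    · exact Or.inl h1
    by_cases h3 : g = e₃
    · exact Or.inr (Or.inl h3)
    right; right
    have hmem : g ∈ {e : E | x ∈ G.ends e} \ ({e₁, e₃} : Set E) := ⟨hg, by simp [h1, h3]⟩
    rw [hf] at hmem
    exact hmem

lemma Multigraph.nu_spec {V E : Type} [Fintype E] (G : Multigraph V E) (k : ℕ) (hk : 0 < k) :
    (∃ S : Set E, G.Colorable k S ∧ S.ncard = G.nu k) ∧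
    ∀ S : Set E, G.Colorable k S → S.ncard ≤ G.nu k := by
  have hbdd : BddAbove {n : ℕ | ∃ S : Set E, G.Colorable k S ∧ S.ncard = n} := by
    refine ⟨Fintype.card E, ?_⟩
    rintro n ⟨S, _, rfl⟩
    calc S.ncard ≤ (Set.univ : Set E).ncard :=
          Set.ncard_le_ncard (Set.subset_univ S) (Set.toFinite _)
      _ = Fintype.card E := by rw [Set.ncard_univ, Nat.card_eq_fintype_card]
  have hne : Set.Nonempty {n : ℕ | ∃ S : Set E, G.Colorable k S ∧ S.ncard = n} :=
    ⟨0, ∅, ⟨fun _ => ⟨0, hk⟩, fun e he => absurd he (Set.notMem_empty e)⟩, Set.ncard_empty E⟩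
  constructor
  · exact Nat.sSup_mem hne hbdd
  · intro S hS
    exact le_csSup hbdd ⟨S, hS, rfl⟩

lemma Multigraph.lift2 {V E V' E' : Type} [Fintype E]
    (G : Multigraph V E) (hG : G.IsCubic)
    (x y z : V) (hxy : x ≠ y) (hyz : y ≠ z) (hxz : x ≠ z)
    (e₁ e₂ e₃ : E)
    (h₁ : G.ends e₁ = s(x, y)) (h₂ : G.ends e₂ = s(y, z)) (h₃ : G.ends e₃ = s(z, x))
    (hnomult : ∀ f : E, (G.ends f = s(x, y) → f = e₁) ∧ (G.ends f = s(y, z) → f = e₂) ∧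
      (G.ends f = s(z, x) → f = e₃))
    (G' : Multigraph V' E')
    (π : V → V') (hπxy : π x = π y) (hπxz : π x = π z)
    (ι : E' → E) (hιinj : Function.Injective ι)
    (hιrange : Set.range ι = {e : E | e ≠ e₁ ∧ e ≠ e₂ ∧ e ≠ e₃})
    (hends : ∀ e' : E', G'.ends e' = (G.ends (ι e')).map π)
    (S' : Set E') (c' : E' → Fin 2) (hc' : G'.IsProperColoring S' c')
    (hyS : ∀ f ∈ S', y ∉ G.ends (ι f)) :
    ∃ S : Set E, G.Colorable 2 S ∧ S.ncard = S'.ncard + 2 := by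
  classical
  have hr : ∀ a : E', ι a ≠ e₁ ∧ ι a ≠ e₂ ∧ ι a ≠ e₃ := fun a => by
    have h : ι a ∈ Set.range ι := ⟨a, rfl⟩
    rwa [hιrange] at h
  -- membership facts
  have hx1 : x ∈ G.ends e₁ := by rw [h₁]; simp
  have hy1 : y ∈ G.ends e₁ := by rw [h₁]; simp
  have hy2 : y ∈ G.ends e₂ := by rw [h₂]; simp
  have hz2 : z ∈ G.ends e₂ := by rw [h₂]; simp
  have hz3 : z ∈ G.ends e₃ := by rw [h₃]; simp
  have hx3 : x ∈ G.ends e₃ := by rw [h₃]; simp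
  have hx2 : x ∉ G.ends e₂ := by rw [h₂]; simp [Sym2.mem_iff, hxy, hxz]
  have hz1 : z ∉ G.ends e₁ := by rw [h₁]; simp [Sym2.mem_iff, Ne.symm hxz, Ne.symm hyz]
  have hy3 : y ∉ G.ends e₃ := by rw [h₃]; simp [Sym2.mem_iff, hyz, Ne.symm hxy]
  have h12 : e₁ ≠ e₂ := fun h => hx2 (h ▸ hx1)
  have h23 : e₂ ≠ e₃ := fun h => hy3 (h ▸ hy2)
  have h13 : e₁ ≠ e₃ := fun h => hz1 (h.symm ▸ hz3)
  -- pendants at x and z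
  obtain ⟨fx, hfx, hfx1, hfx3, hclx⟩ := G.pendant hG x e₁ e₃ h13 hx1 hx3
  obtain ⟨fz, hfz, hfz2, hfz3, hclz⟩ := G.pendant hG z e₂ e₃ h23 hz2 hz3
  have hfx2 : fx ≠ e₂ := fun h => hx2 (h ▸ hfx)
  have hfz1 : fz ≠ e₁ := fun h => hz1 (h ▸ hfz)
  have hyfx : y ∉ G.ends fx := by
    intro hmem
    exact hfx1 ((hnomult fx).1 ((Sym2.mem_and_mem_iff hxy).mp ⟨hfx, hmem⟩))
  have hzfx : z ∉ G.ends fx := by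
    intro hmem
    exact hfx3 ((hnomult fx).2.2 ((Sym2.mem_and_mem_iff (Ne.symm hxz)).mp ⟨hmem, hfx⟩))
  obtain ⟨gx, hgx⟩ : fx ∈ Set.range ι := by rw [hιrange]; exact ⟨hfx1, hfx2, hfx3⟩
  obtain ⟨gz, hgz⟩ : fz ∈ Set.range ι := by rw [hιrange]; exact ⟨hfz1, hfz2, hfz3⟩
  have hfxz : fx ≠ fz := fun h => hzfx (h ▸ hfz)
  have hgxz : gx ≠ gz := fun h => hfxz (by rw [← hgx, ← hgz, h])
  have hadjxz : G'.EdgeAdj gx gz := by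
    refine ⟨π x, ?_, ?_⟩
    · rw [hends gx, hgx]; exact Sym2.mem_map.mpr ⟨x, hfx, rfl⟩
    · rw [hends gz, hgz]; exact Sym2.mem_map.mpr ⟨z, hfz, hπxz.symm⟩
  have hcol : gx ∈ S' → gz ∈ S' → c' gx ≠ c' gz := fun h1 h2 =>
    hc' gx h1 gz h2 hgxz hadjxz
  haveI : Nonempty E' := ⟨gx⟩
  obtain ⟨p, q, hpq, hpa, hqd⟩ := fin2choice (decide (gx ∈ S')) (decide (gz ∈ S'))
    (c' gx) (c' gz) (fun u1 u2 => hcol (of_decide_eq_true u1) (of_decide_eq_true u2))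
  set c : E → Fin 2 := fun e => if e = e₁ then p else if e = e₂ then q
    else c' (Function.invFun ι e) with hc
  have hce1 : c e₁ = p := by simp [hc]
  have hce2 : c e₂ = q := by simp [hc, Ne.symm h12]
  have hcι : ∀ a : E', c (ι a) = c' a := by
    intro a
    obtain ⟨r1, r2, r3⟩ := hr a
    simp [hc, r1, r2, Function.leftInverse_invFun hιinj a]
  -- mixed adjacency
  have hmix : ∀ a ∈ S', ∀ t ∈ ({e₁, e₂} : Set E), G.EdgeAdj (ι a) t → c (ι a) ≠ c t := by
    rintro a ha t ht ⟨v, hv1, hv2⟩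
    rw [Set.mem_insert_iff, Set.mem_singleton_iff] at ht
    rcases ht with rfl | rfl
    · rw [h₁, Sym2.mem_iff] at hv2
      rcases hv2 with rfl | rfl
      · -- v = x
        have hcase := hclx (ι a) hv1
        obtain ⟨r1, r2, r3⟩ := hr a
        rcases hcase with h | h | h
        · exact absurd h r1
        · exact absurd h r3
        · obtain rfl := hιinj (h.trans hgx.symm)
          rw [hcι, hce1]
          exact (hpa (decide_eq_true ha)).symm
      · exact absurd hv1 (hyS a ha)
    · rw [h₂, Sym2.mem_iff] at hv2
      rcases hv2 with rfl | rfl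
      · exact absurd hv1 (hyS a ha)
      · have hcase := hclz (ι a) hv1
        obtain ⟨r1, r2, r3⟩ := hr a
        rcases hcase with h | h | h
        · exact absurd h r2
        · exact absurd h r3
        · obtain rfl := hιinj (h.trans hgz.symm)
          rw [hcι, hce2]
          exact (hqd (decide_eq_true ha)).symm
  refine ⟨ι '' S' ∪ {e₁, e₂}, ⟨c, ?_⟩, ?_⟩
  · rintro e he f hf hef hadj
    rcases he with ⟨a, ha, rfl⟩ | he
    · rcases hf with ⟨b, hb, rfl⟩ | hf
      · have hab : a ≠ b := fun h => hef (by rw [h])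
        obtain ⟨v, hv1, hv2⟩ := hadj
        rw [hcι, hcι]
        refine hc' a ha b hb hab ⟨π v, ?_, ?_⟩
        · rw [hends]; exact Sym2.mem_map.mpr ⟨v, hv1, rfl⟩
        · rw [hends]; exact Sym2.mem_map.mpr ⟨v, hv2, rfl⟩
      · exact hmix a ha f hf hadj
    · rcases hf with ⟨b, hb, rfl⟩ | hf
      · obtain ⟨v, hv1, hv2⟩ := hadj
        exact (hmix b hb e he ⟨v, hv2, hv1⟩).symm
      · rw [Set.mem_insert_iff, Set.mem_singleton_iff] at he hf
        rcases he with rfl | rfl <;> rcases hf with rfl | rfl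
        · exact absurd rfl hef
        · rw [hce1, hce2]; exact hpq
        · rw [hce1, hce2]; exact hpq.symm
        · exact absurd rfl hef
  · have hdisj : Disjoint (ι '' S') ({e₁, e₂} : Set E) := by
      rw [Set.disjoint_left]
      rintro e ⟨a, _, rfl⟩ hmem
      obtain ⟨r1, r2, r3⟩ := hr a
      rw [Set.mem_insert_iff, Set.mem_singleton_iff] at hmem
      rcases hmem with h | h
      · exact r1 h
      · exact r2 h
    rw [Set.ncard_union_eq hdisj (Set.toFinite _) (Set.toFinite _),
      Set.ncard_image_of_injective _ hιinj, Set.ncard_pair h12]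

lemma Multigraph.lift3 {V E V' E' : Type} [Fintype E]
    (G : Multigraph V E) (hG : G.IsCubic)
    (x y z : V) (hxy : x ≠ y) (hyz : y ≠ z) (hxz : x ≠ z)
    (e₁ e₂ e₃ : E)
    (h₁ : G.ends e₁ = s(x, y)) (h₂ : G.ends e₂ = s(y, z)) (h₃ : G.ends e₃ = s(z, x))
    (hnomult : ∀ f : E, (G.ends f = s(x, y) → f = e₁) ∧ (G.ends f = s(y, z) → f = e₂) ∧
      (G.ends f = s(z, x) → f = e₃))
    (G' : Multigraph V' E')
    (π : V → V') (hπxy : π x = π y) (hπxz : π x = π z)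
    (ι : E' → E) (hιinj : Function.Injective ι)
    (hιrange : Set.range ι = {e : E | e ≠ e₁ ∧ e ≠ e₂ ∧ e ≠ e₃})
    (hends : ∀ e' : E', G'.ends e' = (G.ends (ι e')).map π)
    (S' : Set E') (c' : E' → Fin 3) (hc' : G'.IsProperColoring S' c') :
    ∃ S : Set E, G.Colorable 3 S ∧ S.ncard = S'.ncard + 3 := by
  classical
  have hr : ∀ a : E', ι a ≠ e₁ ∧ ι a ≠ e₂ ∧ ι a ≠ e₃ := fun a => by
    have h : ι a ∈ Set.range ι := ⟨a, rfl⟩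
    rwa [hιrange] at h
  -- membership facts
  have hx1 : x ∈ G.ends e₁ := by rw [h₁]; simp
  have hy1 : y ∈ G.ends e₁ := by rw [h₁]; simp
  have hy2 : y ∈ G.ends e₂ := by rw [h₂]; simp
  have hz2 : z ∈ G.ends e₂ := by rw [h₂]; simp
  have hz3 : z ∈ G.ends e₃ := by rw [h₃]; simp
  have hx3 : x ∈ G.ends e₃ := by rw [h₃]; simp
  have hx2 : x ∉ G.ends e₂ := by rw [h₂]; simp [Sym2.mem_iff, hxy, hxz]
  have hz1 : z ∉ G.ends e₁ := by rw [h₁]; simp [Sym2.mem_iff, Ne.symm hxz, Ne.symm hyz]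
  have hy3 : y ∉ G.ends e₃ := by rw [h₃]; simp [Sym2.mem_iff, hyz, Ne.symm hxy]
  have h12 : e₁ ≠ e₂ := fun h => hx2 (h ▸ hx1)
  have h23 : e₂ ≠ e₃ := fun h => hy3 (h ▸ hy2)
  have h13 : e₁ ≠ e₃ := fun h => hz1 (h.symm ▸ hz3)
  -- pendants
  obtain ⟨fx, hfx, hfx1, hfx3, hclx⟩ := G.pendant hG x e₁ e₃ h13 hx1 hx3
  obtain ⟨fy, hfy, hfy1, hfy2, hcly⟩ := G.pendant hG y e₁ e₂ h12 hy1 hy2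
  obtain ⟨fz, hfz, hfz2, hfz3, hclz⟩ := G.pendant hG z e₂ e₃ h23 hz2 hz3
  have hfx2 : fx ≠ e₂ := fun h => hx2 (h ▸ hfx)
  have hfy3 : fy ≠ e₃ := fun h => hy3 (h ▸ hfy)
  have hfz1 : fz ≠ e₁ := fun h => hz1 (h ▸ hfz)
  have hyfx : y ∉ G.ends fx := fun hmem =>
    hfx1 ((hnomult fx).1 ((Sym2.mem_and_mem_iff hxy).mp ⟨hfx, hmem⟩))
  have hzfx : z ∉ G.ends fx := fun hmem =>
    hfx3 ((hnomult fx).2.2 ((Sym2.mem_and_mem_iff (Ne.symm hxz)).mp ⟨hmem, hfx⟩))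
  have hxfy : x ∉ G.ends fy := fun hmem =>
    hfy1 ((hnomult fy).1 ((Sym2.mem_and_mem_iff hxy).mp ⟨hmem, hfy⟩))
  have hzfy : z ∉ G.ends fy := fun hmem =>
    hfy2 ((hnomult fy).2.1 ((Sym2.mem_and_mem_iff hyz).mp ⟨hfy, hmem⟩))
  have hxfz : x ∉ G.ends fz := fun hmem =>
    hfz3 ((hnomult fz).2.2 ((Sym2.mem_and_mem_iff (Ne.symm hxz)).mp ⟨hfz, hmem⟩))
  have hyfz : y ∉ G.ends fz := fun hmem =>
    hfz2 ((hnomult fz).2.1 ((Sym2.mem_and_mem_iff hyz).mp ⟨hmem, hfz⟩))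
  obtain ⟨gx, hgx⟩ : fx ∈ Set.range ι := by rw [hιrange]; exact ⟨hfx1, hfx2, hfx3⟩
  obtain ⟨gy, hgy⟩ : fy ∈ Set.range ι := by rw [hιrange]; exact ⟨hfy1, hfy2, hfy3⟩
  obtain ⟨gz, hgz⟩ : fz ∈ Set.range ι := by rw [hιrange]; exact ⟨hfz1, hfz2, hfz3⟩
  have hfxy : fx ≠ fy := fun h => hyfx (h ▸ hfy)
  have hfyz : fy ≠ fz := fun h => hzfy (h ▸ hfz)
  have hfxz : fx ≠ fz := fun h => hzfx (h ▸ hfz)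
  have hgxy : gx ≠ gy := fun h => hfxy (by rw [← hgx, ← hgy, h])
  have hgyz : gy ≠ gz := fun h => hfyz (by rw [← hgy, ← hgz, h])
  have hgxz : gx ≠ gz := fun h => hfxz (by rw [← hgx, ← hgz, h])
  have hπx_gx : π x ∈ G'.ends gx := by
    rw [hends gx, hgx]; exact Sym2.mem_map.mpr ⟨x, hfx, rfl⟩
  have hπx_gy : π x ∈ G'.ends gy := by
    rw [hends gy, hgy]; exact Sym2.mem_map.mpr ⟨y, hfy, hπxy.symm⟩
  have hπx_gz : π x ∈ G'.ends gz := by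
    rw [hends gz, hgz]; exact Sym2.mem_map.mpr ⟨z, hfz, hπxz.symm⟩
  have hcolxy : gx ∈ S' → gy ∈ S' → c' gx ≠ c' gy := fun u1 u2 =>
    hc' gx u1 gy u2 hgxy ⟨π x, hπx_gx, hπx_gy⟩
  have hcolyz : gy ∈ S' → gz ∈ S' → c' gy ≠ c' gz := fun u1 u2 =>
    hc' gy u1 gz u2 hgyz ⟨π x, hπx_gy, hπx_gz⟩
  have hcolxz : gx ∈ S' → gz ∈ S' → c' gx ≠ c' gz := fun u1 u2 =>
    hc' gx u1 gz u2 hgxz ⟨π x, hπx_gx, hπx_gz⟩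
  obtain ⟨a', b', d', hab, hbd, had, hma, hmb, hmd⟩ :=
    fin3choice (decide (gx ∈ S')) (decide (gy ∈ S')) (decide (gz ∈ S'))
      (c' gx) (c' gy) (c' gz)
      ⟨fun u1 u2 => hcolxy (of_decide_eq_true u1) (of_decide_eq_true u2),
       fun u1 u2 => hcolyz (of_decide_eq_true u1) (of_decide_eq_true u2),
       fun u1 u2 => hcolxz (of_decide_eq_true u1) (of_decide_eq_true u2)⟩
  haveI : Nonempty E' := ⟨gx⟩
  -- colors: c e₁ = d', c e₂ = a', c e₃ = b'
  set c : E → Fin 3 := fun e => if e = e₁ then d' else if e = e₂ then a'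
    else if e = e₃ then b' else c' (Function.invFun ι e) with hc
  have hce1 : c e₁ = d' := by simp [hc]
  have hce2 : c e₂ = a' := by simp [hc, Ne.symm h12]
  have hce3 : c e₃ = b' := by simp [hc, Ne.symm h13, Ne.symm h23]
  have hcι : ∀ a : E', c (ι a) = c' a := by
    intro a
    obtain ⟨r1, r2, r3⟩ := hr a
    simp [hc, r1, r2, r3, Function.leftInverse_invFun hιinj a]
  -- mixed adjacency
  have hmix : ∀ a ∈ S', ∀ t ∈ ({e₁, e₂, e₃} : Set E), G.EdgeAdj (ι a) t → c (ι a) ≠ c t := by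
    rintro a ha t ht ⟨v, hv1, hv2⟩
    have hιa := hr a
    simp only [Set.mem_insert_iff, Set.mem_singleton_iff] at ht
    rcases ht with rfl | rfl | rfl
    · rw [h₁, Sym2.mem_iff] at hv2
      rcases hv2 with rfl | rfl
      · rcases hclx (ι a) hv1 with h | h | h
        · exact absurd h hιa.1
        · exact absurd h hιa.2.2
        · obtain rfl := hιinj (h.trans hgx.symm)
          rw [hcι, hce1, ← hma (decide_eq_true ha)]
          exact had
      · rcases hcly (ι a) hv1 with h | h | h
        · exact absurd h hιa.1
        · exact absurd h hιa.2.1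
        · obtain rfl := hιinj (h.trans hgy.symm)
          rw [hcι, hce1, ← hmb (decide_eq_true ha)]
          exact hbd
    · rw [h₂, Sym2.mem_iff] at hv2
      rcases hv2 with rfl | rfl
      · rcases hcly (ι a) hv1 with h | h | h
        · exact absurd h hιa.1
        · exact absurd h hιa.2.1
        · obtain rfl := hιinj (h.trans hgy.symm)
          rw [hcι, hce2, ← hmb (decide_eq_true ha)]
          exact hab.symm
      · rcases hclz (ι a) hv1 with h | h | h
        · exact absurd h hιa.2.1
        · exact absurd h hιa.2.2
        · obtain rfl := hιinj (h.trans hgz.symm)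
          rw [hcι, hce2, ← hmd (decide_eq_true ha)]
          exact had.symm
    · rw [h₃, Sym2.mem_iff] at hv2
      rcases hv2 with rfl | rfl
      · rcases hclz (ι a) hv1 with h | h | h
        · exact absurd h hιa.2.1
        · exact absurd h hιa.2.2
        · obtain rfl := hιinj (h.trans hgz.symm)
          rw [hcι, hce3, ← hmd (decide_eq_true ha)]
          exact hbd.symm
      · rcases hclx (ι a) hv1 with h | h | h
        · exact absurd h hιa.1
        · exact absurd h hιa.2.2
        · obtain rfl := hιinj (h.trans hgx.symm)
          rw [hcι, hce3, ← hma (decide_eq_true ha)]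
          exact hab
  refine ⟨ι '' S' ∪ {e₁, e₂, e₃}, ⟨c, ?_⟩, ?_⟩
  · rintro e he f hf hef hadj
    rcases he with ⟨a, ha, rfl⟩ | he
    · rcases hf with ⟨b, hb, rfl⟩ | hf
      · have hab2 : a ≠ b := fun h => hef (by rw [h])
        obtain ⟨v, hv1, hv2⟩ := hadj
        rw [hcι, hcι]
        refine hc' a ha b hb hab2 ⟨π v, ?_, ?_⟩
        · rw [hends]; exact Sym2.mem_map.mpr ⟨v, hv1, rfl⟩
        · rw [hends]; exact Sym2.mem_map.mpr ⟨v, hv2, rfl⟩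
      · exact hmix a ha f hf hadj
    · rcases hf with ⟨b, hb, rfl⟩ | hf
      · obtain ⟨v, hv1, hv2⟩ := hadj
        exact (hmix b hb e he ⟨v, hv2, hv1⟩).symm
      · simp only [Set.mem_insert_iff, Set.mem_singleton_iff] at he hf
        rcases he with rfl | rfl | rfl <;> rcases hf with rfl | rfl | rfl
        · exact absurd rfl hef
        · rw [hce1, hce2]; exact had.symm
        · rw [hce1, hce3]; exact hbd.symm
        · rw [hce2, hce1]; exact had
        · exact absurd rfl hef
        · rw [hce2, hce3]; exact hab
        · rw [hce3, hce1]; exact hbd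
        · rw [hce3, hce2]; exact hab.symm
        · exact absurd rfl hef
  · have hdisj : Disjoint (ι '' S') ({e₁, e₂, e₃} : Set E) := by
      rw [Set.disjoint_left]
      rintro e ⟨a, _, rfl⟩ hmem
      obtain ⟨r1, r2, r3⟩ := hr a
      simp only [Set.mem_insert_iff, Set.mem_singleton_iff] at hmem
      rcases hmem with h | h | h
      · exact r1 h
      · exact r2 h
      · exact r3 h
    rw [Set.ncard_union_eq hdisj (Set.toFinite _) (Set.toFinite _),
      Set.ncard_image_of_injective _ hιinj,
      Set.ncard_insert_of_notMem (by simp [h12, h13]) (Set.toFinite _),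
      Set.ncard_pair h23]

/-- Let `G` be a cubic graph containing a triangle on three distinct
vertices `x, y, z` (with edges `e₁, e₂, e₃`) such that no two vertices of the triangle
are joined by a multiple edge, and let `G'` be the cubic graph obtained from `G` by
contracting the triangle to a single vertex: the vertices of `G'` are the images of the
vertices of `G` under a map `π` identifying exactly `x, y, z`, and the edges of `G'`
correspond (via `ι`) exactly to the edges of `G` other than `e₁, e₂, e₃`, with endpoints
transported along `π`.  Then `|V(G')| = |V(G)| − 2`, `ν₂(G) ≥ ν₂(G') + 2`, and
`ν₃(G) ≥ ν₃(G') + 3`. -/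
theorem triangle_contraction_bounds
    {V E V' E' : Type} [Fintype V] [Fintype E] [Fintype V'] [Fintype E']
    (G : Multigraph V E) (hG : G.IsCubic)
    (x y z : V) (hxy : x ≠ y) (hyz : y ≠ z) (hxz : x ≠ z)
    (e₁ e₂ e₃ : E)
    (h₁ : G.ends e₁ = s(x, y)) (h₂ : G.ends e₂ = s(y, z)) (h₃ : G.ends e₃ = s(z, x))
    -- no two vertices of the triangle are joined by a multiple edge:
    (hnomult : ∀ f : E, (G.ends f = s(x, y) → f = e₁) ∧ (G.ends f = s(y, z) → f = e₂) ∧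
      (G.ends f = s(z, x) → f = e₃))
    (G' : Multigraph V' E') (hG' : G'.IsCubic)
    -- `π` identifies exactly the three triangle vertices and nothing else:
    (π : V → V') (hπsurj : Function.Surjective π)
    (hπxy : π x = π y) (hπxz : π x = π z)
    (hπinj : ∀ a b : V, π a = π b →
      a = b ∨ (a ∈ ({x, y, z} : Set V) ∧ b ∈ ({x, y, z} : Set V)))
    -- the edges of `G'` are exactly the non-triangle edges of `G`:
    (ι : E' → E) (hιinj : Function.Injective ι)
    (hιrange : Set.range ι = {e : E | e ≠ e₁ ∧ e ≠ e₂ ∧ e ≠ e₃})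
    (hends : ∀ e' : E', G'.ends e' = (G.ends (ι e')).map π) :
    Fintype.card V' = Fintype.card V - 2 ∧
    G.nu 2 ≥ G'.nu 2 + 2 ∧ G.nu 3 ≥ G'.nu 3 + 3 := by
  classical
  have hr : ∀ a : E', ι a ≠ e₁ ∧ ι a ≠ e₂ ∧ ι a ≠ e₃ := fun a => by
    have h : ι a ∈ Set.range ι := ⟨a, rfl⟩
    rwa [hιrange] at h
  have hx1 : x ∈ G.ends e₁ := by rw [h₁]; simp
  have hy1 : y ∈ G.ends e₁ := by rw [h₁]; simp
  have hy2 : y ∈ G.ends e₂ := by rw [h₂]; simp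
  have hz2 : z ∈ G.ends e₂ := by rw [h₂]; simp
  have hz3 : z ∈ G.ends e₃ := by rw [h₃]; simp
  have hx3 : x ∈ G.ends e₃ := by rw [h₃]; simp
  have hx2 : x ∉ G.ends e₂ := by rw [h₂]; simp [Sym2.mem_iff, hxy, hxz]
  have hz1 : z ∉ G.ends e₁ := by rw [h₁]; simp [Sym2.mem_iff, Ne.symm hxz, Ne.symm hyz]
  have hy3 : y ∉ G.ends e₃ := by rw [h₃]; simp [Sym2.mem_iff, hyz, Ne.symm hxy]
  have h12 : e₁ ≠ e₂ := fun h => hx2 (h ▸ hx1)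
  have h23 : e₂ ≠ e₃ := fun h => hy3 (h ▸ hy2)
  have h13 : e₁ ≠ e₃ := fun h => hz1 (h.symm ▸ hz3)
  obtain ⟨fx, hfx, hfx1, hfx3, hclx⟩ := G.pendant hG x e₁ e₃ h13 hx1 hx3
  obtain ⟨fy, hfy, hfy1, hfy2, hcly⟩ := G.pendant hG y e₁ e₂ h12 hy1 hy2
  obtain ⟨fz, hfz, hfz2, hfz3, hclz⟩ := G.pendant hG z e₂ e₃ h23 hz2 hz3
  have hfx2 : fx ≠ e₂ := fun h => hx2 (h ▸ hfx)
  have hfy3 : fy ≠ e₃ := fun h => hy3 (h ▸ hfy)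
  have hfz1 : fz ≠ e₁ := fun h => hz1 (h ▸ hfz)
  have hyfx : y ∉ G.ends fx := fun hmem =>
    hfx1 ((hnomult fx).1 ((Sym2.mem_and_mem_iff hxy).mp ⟨hfx, hmem⟩))
  have hzfx : z ∉ G.ends fx := fun hmem =>
    hfx3 ((hnomult fx).2.2 ((Sym2.mem_and_mem_iff (Ne.symm hxz)).mp ⟨hmem, hfx⟩))
  have hzfy : z ∉ G.ends fy := fun hmem =>
    hfy2 ((hnomult fy).2.1 ((Sym2.mem_and_mem_iff hyz).mp ⟨hfy, hmem⟩))
  obtain ⟨gx, hgx⟩ : fx ∈ Set.range ι := by rw [hιrange]; exact ⟨hfx1, hfx2, hfx3⟩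
  obtain ⟨gy, hgy⟩ : fy ∈ Set.range ι := by rw [hιrange]; exact ⟨hfy1, hfy2, hfy3⟩
  obtain ⟨gz, hgz⟩ : fz ∈ Set.range ι := by rw [hιrange]; exact ⟨hfz1, hfz2, hfz3⟩
  have hfxy : fx ≠ fy := fun h => hyfx (h ▸ hfy)
  have hfyz : fy ≠ fz := fun h => hzfy (h ▸ hfz)
  have hfxz : fx ≠ fz := fun h => hzfx (h ▸ hfz)
  have hgxy : gx ≠ gy := fun h => hfxy (by rw [← hgx, ← hgy, h])
  have hgyz : gy ≠ gz := fun h => hfyz (by rw [← hgy, ← hgz, h])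
  have hgxz : gx ≠ gz := fun h => hfxz (by rw [← hgx, ← hgz, h])
  have hπx_gx : π x ∈ G'.ends gx := by
    rw [hends gx, hgx]; exact Sym2.mem_map.mpr ⟨x, hfx, rfl⟩
  have hπx_gy : π x ∈ G'.ends gy := by
    rw [hends gy, hgy]; exact Sym2.mem_map.mpr ⟨y, hfy, hπxy.symm⟩
  have hπx_gz : π x ∈ G'.ends gz := by
    rw [hends gz, hgz]; exact Sym2.mem_map.mpr ⟨z, hfz, hπxz.symm⟩
  refine ⟨?_, ?_, ?_⟩
  · -- cardinality
    have hfib : Fintype.card V = ∑ b : V', (Finset.univ.filter (fun a => π a = b)).card := by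
      simpa using Finset.card_eq_sum_card_fiberwise
        (f := π) (s := Finset.univ) (t := Finset.univ) (fun u _ => Finset.mem_univ _)
    have hmain : (Finset.univ.filter (fun a => π a = π x)).card = 3 := by
      have heq : Finset.univ.filter (fun a => π a = π x) = {x, y, z} := by
        ext a
        simp only [Finset.mem_filter, Finset.mem_univ, true_and, Finset.mem_insert,
          Finset.mem_singleton]
        constructor
        · intro h
          rcases hπinj a x h with rfl | ⟨ha, _⟩
          · exact Or.inl rfl
          · simpa using ha
        · rintro (rfl | rfl | rfl)
          · rfl
          · exact hπxy.symm
          · exact hπxz.symm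
      rw [heq, Finset.card_insert_of_notMem (by simp [hxy, hxz]),
        Finset.card_insert_of_notMem (by simp [hyz]), Finset.card_singleton]
    have hother : ∀ b : V', b ≠ π x → (Finset.univ.filter (fun a => π a = b)).card = 1 := by
      intro b hb
      obtain ⟨a, rfl⟩ := hπsurj b
      have hanotri : a ∉ ({x, y, z} : Set V) := by
        intro h
        simp only [Set.mem_insert_iff, Set.mem_singleton_iff] at h
        rcases h with rfl | rfl | rfl
        · exact hb rfl
        · exact hb hπxy.symm
        · exact hb hπxz.symm
      have heq : Finset.univ.filter (fun a' => π a' = π a) = {a} := by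
        ext a'
        simp only [Finset.mem_filter, Finset.mem_univ, true_and, Finset.mem_singleton]
        constructor
        · intro h
          rcases hπinj a' a h with rfl | ⟨_, ha2⟩
          · rfl
          · exact absurd ha2 hanotri
        · rintro rfl; rfl
      rw [heq, Finset.card_singleton]
    have hsum := Finset.add_sum_erase Finset.univ
      (fun b => (Finset.univ.filter (fun a => π a = b)).card) (Finset.mem_univ (π x))
    have hrest : ∑ b ∈ Finset.univ.erase (π x),
        (Finset.univ.filter (fun a => π a = b)).card = (Finset.univ.erase (π x)).card := by
      rw [Finset.card_eq_sum_ones]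
      exact Finset.sum_congr rfl (fun b hb => hother b (Finset.mem_erase.mp hb).1)
    have hcarderase : (Finset.univ.erase (π x)).card = Fintype.card V' - 1 := by
      rw [Finset.card_erase_of_mem (Finset.mem_univ _), Finset.card_univ]
    have hpos : 0 < Fintype.card V' := Fintype.card_pos_iff.mpr ⟨π x⟩
    simp only [hmain, hrest, hcarderase] at hsum
    omega
  · -- nu 2
    obtain ⟨⟨S', hS'col, hS'card⟩, _⟩ := G'.nu_spec 2 (by norm_num)
    obtain ⟨c', hc'⟩ := hS'col
    have hnot3 : gx ∉ S' ∨ gy ∉ S' ∨ gz ∉ S' := by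
      by_contra h
      push_neg at h
      obtain ⟨u1, u2, u3⟩ := h
      exact fin2pigeon (c' gx) (c' gy) (c' gz)
        (hc' gx u1 gy u2 hgxy ⟨π x, hπx_gx, hπx_gy⟩)
        (hc' gy u2 gz u3 hgyz ⟨π x, hπx_gy, hπx_gz⟩)
        (hc' gx u1 gz u3 hgxz ⟨π x, hπx_gx, hπx_gz⟩)
    have hlift : ∃ S : Set E, G.Colorable 2 S ∧ S.ncard = S'.ncard + 2 := by
      rcases hnot3 with hg | hg | hg
      · -- apex x : triple (y, x, z), edges (e₁, e₃, e₂)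
        have hxS : ∀ f ∈ S', x ∉ G.ends (ι f) := by
          intro f hf hmem
          obtain ⟨r1, r2, r3⟩ := hr f
          rcases hclx (ι f) hmem with h | h | h
          · exact r1 h
          · exact r3 h
          · exact hg (by rwa [hιinj (h.trans hgx.symm)] at hf)
        refine Multigraph.lift2 G hG y x z (Ne.symm hxy) hxz hyz e₁ e₃ e₂
          (h₁.trans Sym2.eq_swap) (h₃.trans Sym2.eq_swap) (h₂.trans Sym2.eq_swap)
          (fun f => ⟨fun h => (hnomult f).1 (h.trans Sym2.eq_swap),
            fun h => (hnomult f).2.2 (h.trans Sym2.eq_swap),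
            fun h => (hnomult f).2.1 (h.trans Sym2.eq_swap)⟩)
          G' π hπxy.symm (hπxy.symm.trans hπxz) ι hιinj ?_ hends S' c' hc' hxS
        rw [hιrange]; ext e; simp only [Set.mem_setOf_eq]; tauto
      · -- apex y : identity
        have hyS : ∀ f ∈ S', y ∉ G.ends (ι f) := by
          intro f hf hmem
          obtain ⟨r1, r2, r3⟩ := hr f
          rcases hcly (ι f) hmem with h | h | h
          · exact r1 h
          · exact r2 h
          · exact hg (by rwa [hιinj (h.trans hgy.symm)] at hf)
        exact Multigraph.lift2 G hG x y z hxy hyz hxz e₁ e₂ e₃ h₁ h₂ h₃ hnomult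
          G' π hπxy hπxz ι hιinj hιrange hends S' c' hc' hyS
      · -- apex z : triple (x, z, y), edges (e₃, e₂, e₁)
        have hzS : ∀ f ∈ S', z ∉ G.ends (ι f) := by
          intro f hf hmem
          obtain ⟨r1, r2, r3⟩ := hr f
          rcases hclz (ι f) hmem with h | h | h
          · exact r2 h
          · exact r3 h
          · exact hg (by rwa [hιinj (h.trans hgz.symm)] at hf)
        refine Multigraph.lift2 G hG x z y hxz (Ne.symm hyz) hxy e₃ e₂ e₁
          (h₃.trans Sym2.eq_swap) (h₂.trans Sym2.eq_swap) (h₁.trans Sym2.eq_swap)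
          (fun f => ⟨fun h => (hnomult f).2.2 (h.trans Sym2.eq_swap),
            fun h => (hnomult f).2.1 (h.trans Sym2.eq_swap),
            fun h => (hnomult f).1 (h.trans Sym2.eq_swap)⟩)
          G' π hπxz hπxy ι hιinj ?_ hends S' c' hc' hzS
        rw [hιrange]; ext e; simp only [Set.mem_setOf_eq]; tauto
    obtain ⟨S, hScol, hScard⟩ := hlift
    have hle := (G.nu_spec 2 (by norm_num)).2 S hScol
    rw [hScard, hS'card] at hle
    exact hle
  · -- nu 3
    obtain ⟨⟨S', hS'col, hS'card⟩, _⟩ := G'.nu_spec 3 (by norm_num)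
    obtain ⟨c', hc'⟩ := hS'col
    obtain ⟨S, hScol, hScard⟩ := Multigraph.lift3 G hG x y z hxy hyz hxz e₁ e₂ e₃ h₁ h₂ h₃
      hnomult G' π hπxy hπxz ι hιinj hιrange hends S' c' hc'
    have hle := (G.nu_spec 3 (by norm_num)).2 S hScol
    rw [hScard, hS'card] at hle
    exact hle
end
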